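/- arXiv:1206.0612 — 4 statements merged into one kernel-verified Lean document; each statement's English description precedes it below -/
import Mathlib

section
/- Let 𝒜 be a unital associative ℂ-algebra, let q ∈ ℂ with q ≠ 0, and let A, B ∈ 𝒜 satisfy A² = (q−q⁻¹)A + 1 and B² = (q−q⁻¹)B + 1. Suppose that for some fixed pairwise distinct α, β, γ ∈ ℂ one has A(α,β)·B(α,γ)·A(β,γ) = B(β,γ)·A(α,γ)·B(α,β), where X(α,β) := X + (q−q⁻¹)·β/(α−β) for X ∈ {A,B}. Then A·B·A = B·A·B. -/
/-!
Expanding both sides of the Baxterized relation with the Hecke relation `X² = (q - q⁻¹) X + 1`,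
everything except the cubic terms and one multiple of `A - B` cancels:
`A(α,β) B(α,γ) A(β,γ) - B(β,γ) A(α,γ) B(α,β) = ABA - BAB + c (A - B)`.
For the spectral shifts `x = λβ/(α-β)`, `y = λγ/(α-γ)`, `z = λγ/(β-γ)` the coefficient
`c = λy + yz + xy - xz` vanishes identically, so the braid relation is what remains.
-/

theorem hecke_shifted_triple_sub {R 𝒜 : Type*} [CommRing R] [Ring 𝒜] [Algebra R 𝒜]
    (l x y z : R) {A B : 𝒜} (hA : A ^ 2 = l • A + 1) (hB : B ^ 2 = l • B + 1) :
    (A + algebraMap R 𝒜 x) * (B + algebraMap R 𝒜 y) * (A + algebraMap R 𝒜 z) -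
        (B + algebraMap R 𝒜 z) * (A + algebraMap R 𝒜 y) * (B + algebraMap R 𝒜 x) =
      A * B * A - B * A * B + (l * y + y * z + x * y - x * z) • (A - B) := by
  simp only [Algebra.algebraMap_eq_smul_one, mul_add, add_mul, smul_mul_assoc,
    mul_smul_comm, mul_one, one_mul]
  rw [← sq A, ← sq B, hA, hB]
  module

theorem baxter_shift_coeff_eq_zero {K : Type*} [Field K] (l : K) {α β γ : K}
    (hαβ : α ≠ β) (hβγ : β ≠ γ) (hαγ : α ≠ γ) :
    l * (l * γ / (α - γ)) + l * γ / (α - γ) * (l * γ / (β - γ)) +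
        l * β / (α - β) * (l * γ / (α - γ)) - l * β / (α - β) * (l * γ / (β - γ)) = 0 := by
  have hab : α - β ≠ 0 := sub_ne_zero.2 hαβ
  have hbc : β - γ ≠ 0 := sub_ne_zero.2 hβγ
  have hac : α - γ ≠ 0 := sub_ne_zero.2 hαγ
  field_simp
  ring

theorem baxterized_implies_braid_general
    (𝒜 : Type*) [Ring 𝒜] [Algebra ℂ 𝒜] (q : ℂ) (A B : 𝒜)
    (hA : A ^ 2 = (q - q⁻¹) • A + 1) (hB : B ^ 2 = (q - q⁻¹) • B + 1)
    (α β γ : ℂ) (hαβ : α ≠ β) (hβγ : β ≠ γ) (hαγ : α ≠ γ)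
    (h : (A + algebraMap ℂ 𝒜 ((q - q⁻¹) * β / (α - β))) *
          (B + algebraMap ℂ 𝒜 ((q - q⁻¹) * γ / (α - γ))) *
          (A + algebraMap ℂ 𝒜 ((q - q⁻¹) * γ / (β - γ))) =
        (B + algebraMap ℂ 𝒜 ((q - q⁻¹) * γ / (β - γ))) *
          (A + algebraMap ℂ 𝒜 ((q - q⁻¹) * γ / (α - γ))) *
          (B + algebraMap ℂ 𝒜 ((q - q⁻¹) * β / (α - β)))) :
    A * B * A = B * A * B := by
  have hdiff := hecke_shifted_triple_sub (q - q⁻¹) ((q - q⁻¹) * β / (α - β))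
    ((q - q⁻¹) * γ / (α - γ)) ((q - q⁻¹) * γ / (β - γ)) hA hB
  rw [sub_eq_zero.2 h, baxter_shift_coeff_eq_zero _ hαβ hβγ hαγ, zero_smul, add_zero] at hdiff
  exact sub_eq_zero.1 hdiff.symm

/-- If `A, B` satisfy the Hecke quadratic relation and the Baxterized
braid relation `A(α,β)·B(α,γ)·A(β,γ) = B(β,γ)·A(α,γ)·B(α,β)` holds for some fixed
pairwise distinct `α, β, γ ∈ ℂ` (with `X(α,β) := X + (q−q⁻¹)·β/(α−β)`),
then `A·B·A = B·A·B`. -/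
theorem baxterized_implies_braid
    (𝒜 : Type*) [Ring 𝒜] [Algebra ℂ 𝒜] (q : ℂ) (hq : q ≠ 0) (A B : 𝒜)
    (hA : A ^ 2 = (q - q⁻¹) • A + 1) (hB : B ^ 2 = (q - q⁻¹) • B + 1)
    (α β γ : ℂ) (hαβ : α ≠ β) (hβγ : β ≠ γ) (hαγ : α ≠ γ)
    (h : (A + algebraMap ℂ 𝒜 ((q - q⁻¹) * β / (α - β))) *
          (B + algebraMap ℂ 𝒜 ((q - q⁻¹) * γ / (α - γ))) *
          (A + algebraMap ℂ 𝒜 ((q - q⁻¹) * γ / (β - γ))) =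
        (B + algebraMap ℂ 𝒜 ((q - q⁻¹) * γ / (β - γ))) *
          (A + algebraMap ℂ 𝒜 ((q - q⁻¹) * γ / (α - γ))) *
          (B + algebraMap ℂ 𝒜 ((q - q⁻¹) * β / (α - β)))) :
    A * B * A = B * A * B :=
  baxterized_implies_braid_general 𝒜 q A B hA hB α β γ hαβ hβγ hαγ h
end

section
/- Let ρ be a C-representation of H(m,1,n) on a finite-dimensional ℂ-vector space V, with parameters satisfying the restrictions, and let e ∈ V be a nonzero vector with ρ(J_k)e = a_k·e for all k = 1, …, n. If for some i ∈ {1,…,n−1} one has a_{i+1} ≠ q²·a_i and a_{i+1} ≠ q⁻²·a_i, then the vector e' := ρ(σ_i)e − ((q−q⁻¹)·a_{i+1}/(a_{i+1}−a_i))·e is nonzero and satisfies ρ(J_i)e' = a_{i+1}·e', ρ(J_{i+1})e' = a_i·e', and ρ(J_k)e' = a_k·e' for all k ≠ i, i+1. -/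
/-!
Write `S = σ_i`, `J = J_i`, `δ = q - q⁻¹`, so that `S² = δS + 1` and `J_{i+1} = SJS`.
Applying `S` to `SJS e = a_{i+1} e` gives `J (S e) = a_{i+1} S e - δ a_{i+1} e`, so
`(J - a_{i+1})(J - a_i)` kills `S e`. If `a_i = a_{i+1}`, diagonalizability of `J` forces
`δ a_i = 0`, which the hypotheses exclude; hence `a_i ≠ a_{i+1}`, and
`c = δ a_{i+1} / (a_{i+1} - a_i)` is the coefficient making `S e - c e` an eigenvector of `J` and
of `SJS` with the two eigenvalues exchanged. It is nonzero because `c` is not a root of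
`X² - δX - 1`, which kills `S`: indeed
`(a_{i+1} - a_i)² (c² - δc - 1) = -(a_{i+1} - q² a_i)(a_{i+1} - q⁻² a_i)`.
The other `J_k` commute with `σ_i` by the braid relations.
-/

open Classical

noncomputable section

namespace CHA

abbrev Gen (n : ℕ) := Unit ⊕ Fin (n - 1)
def fτ (n : ℕ) : FreeAlgebra ℂ (Gen n) := FreeAlgebra.ι ℂ (Sum.inl ())
def fσ (n : ℕ) (i : Fin (n - 1)) : FreeAlgebra ℂ (Gen n) := FreeAlgebra.ι ℂ (Sum.inr i)
inductive Rel (m n : ℕ) (q : ℂ) (v : Fin m → ℂ) :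
    FreeAlgebra ℂ (Gen n) → FreeAlgebra ℂ (Gen n) → Prop
  | braid (i j : Fin (n - 1)) (hij : (i : ℕ) + 1 = (j : ℕ)) :
      Rel m n q v (fσ n i * fσ n j * fσ n i) (fσ n j * fσ n i * fσ n j)
  | comm (i j : Fin (n - 1)) (hij : (i : ℕ) + 1 < (j : ℕ)) :
      Rel m n q v (fσ n i * fσ n j) (fσ n j * fσ n i)
  | quad (i : Fin (n - 1)) :
      Rel m n q v (fσ n i * fσ n i) ((q - q⁻¹) • fσ n i + 1)
  | reflection (i : Fin (n - 1)) (hi : (i : ℕ) = 0) :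
      Rel m n q v (fτ n * fσ n i * (fτ n * fσ n i)) (fσ n i * fτ n * (fσ n i * fτ n))
  | taucomm (i : Fin (n - 1)) (hi : 0 < (i : ℕ)) :
      Rel m n q v (fτ n * fσ n i) (fσ n i * fτ n)
  | cyclotomic :
      Rel m n q v ((List.ofFn fun k : Fin m =>
        fτ n - algebraMap ℂ (FreeAlgebra ℂ (Gen n)) (v k)).prod) 0
abbrev Hecke (m n : ℕ) (q : ℂ) (v : Fin m → ℂ) := RingQuot (Rel m n q v)
def τgen (m n : ℕ) (q : ℂ) (v : Fin m → ℂ) : Hecke m n q v :=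
  RingQuot.mkAlgHom ℂ (Rel m n q v) (fτ n)
def σgen (m n : ℕ) (q : ℂ) (v : Fin m → ℂ) (i : Fin (n - 1)) : Hecke m n q v :=
  RingQuot.mkAlgHom ℂ (Rel m n q v) (fσ n i)
def σN (m n : ℕ) (q : ℂ) (v : Fin m → ℂ) (k : ℕ) : Hecke m n q v :=
  if h : k < n - 1 then σgen m n q v ⟨k, h⟩ else 1
def JMn (m n : ℕ) (q : ℂ) (v : Fin m → ℂ) : ℕ → Hecke m n q v
  | 0 => τgen m n q v
  | k + 1 => σN m n q v k * JMn m n q v k * σN m n q v k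
def JM (m n : ℕ) (q : ℂ) (v : Fin m → ℂ) (i : Fin n) : Hecke m n q v :=
  JMn m n q v i.val
def Restrictions (m n : ℕ) (q : ℂ) (v : Fin m → ℂ) : Prop :=
  (∀ N : ℕ, 1 ≤ N → N < n → (∑ j ∈ Finset.range (N + 1), q ^ (2 * j)) ≠ 0) ∧
  (∀ j k : Fin m, j ≠ k → ∀ i : ℤ, -(n : ℤ) < i → i < (n : ℤ) → q ^ (2 * i) * v j ≠ v k) ∧
  (∀ j, v j ≠ 0)

section Rep

variable {m n : ℕ} {q : ℂ} {v : Fin m → ℂ}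
variable {V : Type*} [AddCommGroup V] [Module ℂ V]

/-- A linear operator is diagonalizable iff its eigenspaces span. -/
def Diagonalizable (f : Module.End ℂ V) : Prop := (⨆ c : ℂ, f.eigenspace c) = ⊤

/-- A subspace is invariant under a set of operators. -/
def InvariantUnder (S : Set (Module.End ℂ V)) (p : Submodule ℂ V) : Prop :=
  ∀ T ∈ S, ∀ x ∈ p, T x ∈ p

/-- `V` is completely reducible under the (sub)algebra generated by the operators in `S`:
every `S`-invariant subspace has an `S`-invariant complement. -/
def CompletelyReducible (S : Set (Module.End ℂ V)) : Prop :=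
  ∀ p : Submodule ℂ V, InvariantUnder S p → ∃ p', InvariantUnder S p' ∧ IsCompl p p'

/-- A `C`-representation of `H(m,1,n)`: all Jucys–Murphy operators are diagonalizable and,
for each `i = 1,…,n−1`, the action of the subalgebra generated by `J_i`, `J_{i+1}`, `σ_i`
is completely reducible. -/
def IsCRep (ρ : Hecke m n q v →ₐ[ℂ] Module.End ℂ V) : Prop :=
  (∀ i : Fin n, Diagonalizable (ρ (JM m n q v i))) ∧
  ∀ i : Fin (n - 1),
    CompletelyReducible
      {ρ (JM m n q v ⟨i.val, by have := i.isLt; omega⟩),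
       ρ (JM m n q v ⟨i.val + 1, by have := i.isLt; omega⟩),
       ρ (σgen m n q v i)}

end Rep

section Eigenspaces

variable {V : Type*} [AddCommGroup V] [Module ℂ V] [FiniteDimensional ℂ V]

theorem Diagonalizable.genEigenspace_eq_eigenspace {f : Module.End ℂ V} (hf : Diagonalizable f)
    (μ : ℂ) {k : ℕ∞} (hk : 0 < k) : f.genEigenspace μ k = f.eigenspace μ := by
  refine le_antisymm ?_
    (f.genEigenspace μ |>.monotone (by simpa using Order.one_le_iff_pos.mpr hk))
  have hdecomp := Submodule.inf_iSup_genEigenspace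
    (Module.End.mapsTo_genEigenspace_of_comm (Commute.refl f) μ k) 1
  rw [show (⨆ c, f.genEigenspace c 1) = ⊤ from hf, inf_top_eq] at hdecomp
  rw [hdecomp]
  refine iSup_le fun c ↦ ?_
  rcases eq_or_ne c μ with rfl | hc
  · exact inf_le_right
  · simp [(f.disjoint_genEigenspace hc.symm k 1).eq_bot]

end Eigenspaces

section Intertwiner

variable {V : Type*} [AddCommGroup V] [Module ℂ V] {δ a₁ a₂ c : ℂ} {S J : Module.End ℂ V} {e : V}

theorem apply_apply_of_conj_eigen (hS : ∀ x, S (S x) = δ • S x + x)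
    (h₂ : S (J (S e)) = a₂ • e) : J (S e) = a₂ • S e - (δ * a₂) • e := by
  have h := hS (J (S e))
  rw [h₂, map_smul] at h
  rw [h, smul_smul]
  abel

theorem conj_apply_apply (hS : ∀ x, S (S x) = δ • S x + x) (h₁ : J e = a₁ • e)
    (h₂ : S (J (S e)) = a₂ • e) : S (J (S (S e))) = a₁ • S e + (δ * a₂) • e := by
  rw [hS, map_add, map_smul, map_add, map_smul, h₂, h₁, map_smul, smul_smul]
  abel

theorem sub_smul_ne_zero_of_sq_ne (hS : ∀ x, S (S x) = δ • S x + x) (he : e ≠ 0)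
    (hc : c ^ 2 ≠ δ * c + 1) : S e - c • e ≠ 0 := by
  intro h
  have hSe : S e = c • e := sub_eq_zero.mp h
  have h2 := hS e
  rw [hSe, map_smul, hSe, smul_smul, smul_smul] at h2
  refine hc (smul_left_injective ℂ he ?_)
  simp only [sq, add_smul, one_smul, h2]

theorem eigenvalues_ne_of_diagonalizable [FiniteDimensional ℂ V] (hJ : Diagonalizable J)
    (hS : ∀ x, S (S x) = δ • S x + x) (he : e ≠ 0) (h₁ : J e = a₁ • e)
    (h₂ : S (J (S e)) = a₂ • e) (ha : (a₂ - a₁) ^ 2 ≠ δ ^ 2 * a₁ * a₂) : a₁ ≠ a₂ := by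
  rintro rfl
  have hSe := apply_apply_of_conj_eigen hS h₂
  have hmem : S e ∈ J.genEigenspace a₁ (2 : ℕ) := by
    rw [Module.End.mem_genEigenspace_nat, LinearMap.mem_ker, sq, Module.End.mul_apply]
    simp only [LinearMap.sub_apply, LinearMap.smul_apply, Module.End.one_apply, hSe,
      map_sub, map_smul, h₁]
    module
  rw [hJ.genEigenspace_eq_eigenspace a₁ (by norm_num), Module.End.mem_eigenspace_iff, hSe,
    sub_eq_self, smul_eq_zero] at hmem
  rcases hmem with hδa | rfl
  · exact ha (by linear_combination (-δ * a₁) * hδa)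
  · exact he rfl

theorem sq_ne_of_mul_sub_eq (hc : c * (a₂ - a₁) = δ * a₂) (ha : (a₂ - a₁) ^ 2 ≠ δ ^ 2 * a₁ * a₂) :
    c ^ 2 ≠ δ * c + 1 := fun h ↦ ha <| by
  linear_combination (-(a₂ - a₁) ^ 2) * h + (c * (a₂ - a₁) + δ * a₂ - δ * (a₂ - a₁)) * hc

theorem apply_sub_smul_eq (hS : ∀ x, S (S x) = δ • S x + x) (h₁ : J e = a₁ • e)
    (h₂ : S (J (S e)) = a₂ • e) (hc : c * (a₂ - a₁) = δ * a₂) :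
    J (S e - c • e) = a₂ • (S e - c • e) := by
  rw [map_sub, map_smul, apply_apply_of_conj_eigen hS h₂, h₁]
  match_scalars
  · ring
  · linear_combination hc

theorem conj_apply_sub_smul_eq (hS : ∀ x, S (S x) = δ • S x + x) (h₁ : J e = a₁ • e)
    (h₂ : S (J (S e)) = a₂ • e) (hc : c * (a₂ - a₁) = δ * a₂) :
    S (J (S (S e - c • e))) = a₁ • (S e - c • e) := by
  rw [map_sub, map_smul, map_sub, map_smul, map_sub, map_smul, conj_apply_apply hS h₁ h₂, h₂]
  match_scalars
  · ring
  · linear_combination -hc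

theorem intertwiner_eigenvector [FiniteDimensional ℂ V] (hJ : Diagonalizable J)
    (hS : ∀ x, S (S x) = δ • S x + x) (he : e ≠ 0) (h₁ : J e = a₁ • e)
    (h₂ : S (J (S e)) = a₂ • e) (ha : (a₂ - a₁) ^ 2 ≠ δ ^ 2 * a₁ * a₂) :
    S e - (δ * a₂ / (a₂ - a₁)) • e ≠ 0 ∧
      J (S e - (δ * a₂ / (a₂ - a₁)) • e) = a₂ • (S e - (δ * a₂ / (a₂ - a₁)) • e) ∧
      S (J (S (S e - (δ * a₂ / (a₂ - a₁)) • e))) = a₁ • (S e - (δ * a₂ / (a₂ - a₁)) • e) := by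
  have hne := eigenvalues_ne_of_diagonalizable hJ hS he h₁ h₂ ha
  have hc : δ * a₂ / (a₂ - a₁) * (a₂ - a₁) = δ * a₂ :=
    div_mul_cancel₀ _ (sub_ne_zero.mpr hne.symm)
  exact ⟨sub_smul_ne_zero_of_sq_ne hS he (sq_ne_of_mul_sub_eq hc ha),
    apply_sub_smul_eq hS h₁ h₂ hc, conj_apply_sub_smul_eq hS h₁ h₂ hc⟩

theorem apply_sub_smul_of_commute {T : Module.End ℂ V} {a : ℂ} (hST : Commute S T)
    (h : T e = a • e) : T (S e - c • e) = a • (S e - c • e) := by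
  rw [map_sub, map_smul, ← Module.End.mul_apply, ← hST.eq, Module.End.mul_apply, h, map_smul,
    smul_sub, smul_comm]

end Intertwiner

section Relations

variable {m n : ℕ} {q : ℂ} {v : Fin m → ℂ}

theorem σgen_mul_self (i : Fin (n - 1)) :
    σgen m n q v i * σgen m n q v i = (q - q⁻¹) • σgen m n q v i + 1 := by
  simpa only [σgen, map_mul, map_add, map_smul, map_one] using
    RingQuot.mkAlgHom_rel ℂ (Rel.quad (m := m) (q := q) (v := v) i)

theorem σN_braid {k : ℕ} (hk : k + 1 < n - 1) :
    σN m n q v k * σN m n q v (k + 1) * σN m n q v k =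
      σN m n q v (k + 1) * σN m n q v k * σN m n q v (k + 1) := by
  rw [σN, σN, dif_pos hk, dif_pos (by omega)]
  simpa only [σgen, map_mul] using
    RingQuot.mkAlgHom_rel ℂ (Rel.braid (m := m) (q := q) (v := v) ⟨k, by omega⟩ ⟨k + 1, hk⟩ rfl)

theorem commute_σN_σN {j k : ℕ} (h : j + 1 < k) : Commute (σN m n q v j) (σN m n q v k) := by
  unfold σN
  split_ifs with hj hk
  · simpa only [Commute, SemiconjBy, σgen, map_mul] using
      RingQuot.mkAlgHom_rel ℂ (Rel.comm (m := m) (q := q) (v := v) ⟨j, hj⟩ ⟨k, hk⟩ h)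
  all_goals simp

theorem commute_τgen_σN {k : ℕ} (hk : 0 < k) : Commute (τgen m n q v) (σN m n q v k) := by
  unfold σN
  split_ifs with h
  · simpa only [Commute, SemiconjBy, σgen, τgen, map_mul] using
      RingQuot.mkAlgHom_rel ℂ (Rel.taucomm (m := m) (q := q) (v := v) ⟨k, h⟩ hk)
  · exact Commute.one_right _

theorem commute_σN_JMn_of_lt {j k : ℕ} (h : k < j) : Commute (σN m n q v j) (JMn m n q v k) := by
  induction k with
  | zero => exact (commute_τgen_σN (by omega)).symm
  | succ k ih =>
    have hjk : Commute (σN m n q v j) (σN m n q v k) := (commute_σN_σN (by omega)).symm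
    exact (hjk.mul_right (ih (by omega))).mul_right hjk

theorem commute_σN_JMn_of_add_two_le {j k : ℕ} (hj : j + 2 < n) (h : j + 2 ≤ k) :
    Commute (σN m n q v j) (JMn m n q v k) := by
  induction k, h using Nat.le_induction with
  | base =>
    set s := σN m n q v j
    set t := σN m n q v (j + 1)
    set J := JMn m n q v j
    have hb : s * t * s = t * s * t := σN_braid (by omega)
    have htJ : t * J = J * t := commute_σN_JMn_of_lt (by omega)
    show s * (t * (s * J * s) * t) = t * (s * J * s) * t * s
    calc s * (t * (s * J * s) * t) = s * t * s * J * s * t := by simp only [mul_assoc]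
      _ = t * s * (t * J) * s * t := by rw [hb]; simp only [mul_assoc]
      _ = t * s * J * (t * s * t) := by rw [htJ]; simp only [mul_assoc]
      _ = t * (s * J * s) * t * s := by rw [← hb]; simp only [mul_assoc]
  | succ k hk ih =>
    have hjk : Commute (σN m n q v j) (σN m n q v k) := commute_σN_σN (by omega)
    exact (hjk.mul_right ih).mul_right hjk

end Relations

section JucysMurphy

variable {m n : ℕ} {q : ℂ} {v : Fin m → ℂ}

theorem σN_of_fin (i : Fin (n - 1)) : σN m n q v i = σgen m n q v i := dif_pos i.isLt

theorem JM_succ (i : Fin (n - 1)) (hi : i.val + 1 < n) (hi' : i.val < n) :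
    JM m n q v ⟨i.val + 1, hi⟩ = σgen m n q v i * JM m n q v ⟨i.val, hi'⟩ * σgen m n q v i := by
  simp only [JM, JMn, σN_of_fin]

theorem commute_σgen_JM {i : Fin (n - 1)} {k : Fin n} (h₁ : k.val ≠ i.val)
    (h₂ : k.val ≠ i.val + 1) : Commute (σgen m n q v i) (JM m n q v k) := by
  rw [← σN_of_fin, JM]
  rcases lt_or_gt_of_ne h₁ with h | h
  · exact commute_σN_JMn_of_lt h
  · exact commute_σN_JMn_of_add_two_le (by omega) (by omega)

end JucysMurphy

theorem sq_sub_ne_of_ne_sq_mul {q a₁ a₂ : ℂ} (hq : q ≠ 0) (h₁ : a₂ ≠ q ^ 2 * a₁)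
    (h₂ : a₂ ≠ (q ^ 2)⁻¹ * a₁) : (a₂ - a₁) ^ 2 ≠ (q - q⁻¹) ^ 2 * a₁ * a₂ := by
  have hfac : (a₂ - a₁) ^ 2 - (q - q⁻¹) ^ 2 * a₁ * a₂ =
      (a₂ - q ^ 2 * a₁) * (a₂ - (q ^ 2)⁻¹ * a₁) := by
    field_simp
    ring
  rw [← sub_ne_zero, hfac]
  exact mul_ne_zero (sub_ne_zero.mpr h₁) (sub_ne_zero.mpr h₂)

/-- Proposition 3.1(c).  In a `C`-representation of `H(m,1,n)`,
with parameters satisfying the restrictions, if `a_{i+1} ≠ q^{±2}·a_i` on a common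
eigenvector `e`, then `e' := σ_i e − ((q−q⁻¹)a_{i+1}/(a_{i+1}−a_i))·e` is nonzero and
is a common eigenvector with the string obtained by exchanging `a_i` and `a_{i+1}`. -/
theorem intertwined_JM_eigenvector
    (m n : ℕ) (q : ℂ) (hq : q ≠ 0) (v : Fin m → ℂ)
    (V : Type*) [AddCommGroup V] [Module ℂ V] [FiniteDimensional ℂ V]
    (ρ : Hecke m n q v →ₐ[ℂ] Module.End ℂ V) (hρ : IsCRep ρ)
    (e : V) (he : e ≠ 0) (a : Fin n → ℂ)
    (hev : ∀ k : Fin n, ρ (JM m n q v k) e = a k • e) :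
    ∀ i : Fin (n - 1),
      a ⟨i.val + 1, by have := i.isLt; omega⟩ ≠
          q ^ 2 * a ⟨i.val, by have := i.isLt; omega⟩ →
      a ⟨i.val + 1, by have := i.isLt; omega⟩ ≠
          (q ^ 2)⁻¹ * a ⟨i.val, by have := i.isLt; omega⟩ →
      (ρ (σgen m n q v i) e -
          ((q - q⁻¹) * a ⟨i.val + 1, by have := i.isLt; omega⟩ /
              (a ⟨i.val + 1, by have := i.isLt; omega⟩ -
                a ⟨i.val, by have := i.isLt; omega⟩)) • e) ≠ 0 ∧
      ρ (JM m n q v ⟨i.val, by have := i.isLt; omega⟩)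
          (ρ (σgen m n q v i) e -
            ((q - q⁻¹) * a ⟨i.val + 1, by have := i.isLt; omega⟩ /
                (a ⟨i.val + 1, by have := i.isLt; omega⟩ -
                  a ⟨i.val, by have := i.isLt; omega⟩)) • e) =
        a ⟨i.val + 1, by have := i.isLt; omega⟩ •
          (ρ (σgen m n q v i) e -
            ((q - q⁻¹) * a ⟨i.val + 1, by have := i.isLt; omega⟩ /
                (a ⟨i.val + 1, by have := i.isLt; omega⟩ -
                  a ⟨i.val, by have := i.isLt; omega⟩)) • e) ∧
      ρ (JM m n q v ⟨i.val + 1, by have := i.isLt; omega⟩)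
          (ρ (σgen m n q v i) e -
            ((q - q⁻¹) * a ⟨i.val + 1, by have := i.isLt; omega⟩ /
                (a ⟨i.val + 1, by have := i.isLt; omega⟩ -
                  a ⟨i.val, by have := i.isLt; omega⟩)) • e) =
        a ⟨i.val, by have := i.isLt; omega⟩ •
          (ρ (σgen m n q v i) e -
            ((q - q⁻¹) * a ⟨i.val + 1, by have := i.isLt; omega⟩ /
                (a ⟨i.val + 1, by have := i.isLt; omega⟩ -
                  a ⟨i.val, by have := i.isLt; omega⟩)) • e) ∧
      ∀ k : Fin n, (k : ℕ) ≠ i.val → (k : ℕ) ≠ i.val + 1 →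
        ρ (JM m n q v k)
            (ρ (σgen m n q v i) e -
              ((q - q⁻¹) * a ⟨i.val + 1, by have := i.isLt; omega⟩ /
                  (a ⟨i.val + 1, by have := i.isLt; omega⟩ -
                    a ⟨i.val, by have := i.isLt; omega⟩)) • e) =
          a k •
            (ρ (σgen m n q v i) e -
              ((q - q⁻¹) * a ⟨i.val + 1, by have := i.isLt; omega⟩ /
                  (a ⟨i.val + 1, by have := i.isLt; omega⟩ -
                    a ⟨i.val, by have := i.isLt; omega⟩)) • e) := by
  intro i h₁ h₂
  have hi : i.val + 1 < n := by omega
  set S := ρ (σgen m n q v i)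
  have hS : ∀ x, S (S x) = (q - q⁻¹) • S x + x := fun x ↦ by
    simpa using LinearMap.congr_fun (congrArg ρ (σgen_mul_self (m := m) (q := q) (v := v) i)) x
  have hJ : ∀ x,
      ρ (JM m n q v ⟨i.val + 1, hi⟩) x = S (ρ (JM m n q v ⟨i.val, by omega⟩) (S x)) :=
    fun x ↦ by rw [JM_succ, map_mul, map_mul]; rfl
  obtain ⟨hne, hJi, hJi₁⟩ := intertwiner_eigenvector (hρ.1 _) hS he (hev _)
    ((hJ e).symm.trans (hev _)) (sq_sub_ne_of_ne_sq_mul hq h₁ h₂)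
  exact ⟨hne, hJi, (hJ _).trans hJi₁, fun k hk₁ hk₂ ↦
    apply_sub_smul_of_commute ((commute_σgen_JM hk₁ hk₂).map ρ) (hev k)⟩

end CHA
end
end

section
/- Let λ be an m-partition of n satisfying: (i) λ is not of the form (∅, …, ∅, μ, ∅, …, ∅) with exactly one nonempty component μ where |μ| ≤ 2, or μ = (2,1), or μ = (2,1,1), or μ = (3,1); and (ii) λ is not of the form having exactly two nonempty components, each consisting of a single box. Let λ¹, …, λˡ be m-partitions of n (with l ≥ 1), each different from λ. Then the set { λ∖{α} : α a removable m-node of λ } is not equal to the set { λʲ∖{β} : 1 ≤ j ≤ l, β a removable m-node of λʲ } (as sets of m-partitions of n−1). -/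
/-!
Call the `m`-partitions `λ ∖ {α}` the children of `λ`. If the children of `λ` are exactly the
children of `Λ_1, …, Λ_l`, then no `Λ_j` has two removable nodes: two distinct `m`-partitions share at most one child, so two children of `Λ_j` would force
`Λ_j = λ`. Hence every `Λ_j` is a rectangle, and every child of `λ` is a rectangle minus its corner,
obtained from a rectangle other than `λ`. Such a child has at most one nonempty component, so if `λ`
has two nonempty components, they are single boxes and there is no third one. If `λ` is a single
diagram, then for each of its corners `λ` is a rectangle whose corner box was moved to the end of the
first row or to the bottom of the first column; the first corner of `λ` and the one below it leave
only `(2,1)`, `(2,1,1)` and `(3,1)` among the diagrams with at least three boxes.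
-/

open Classical

noncomputable section

namespace CHA

/-- An `m`-node: a component index `k : Fin m` together with a (0-based) cell
`(row, column)` of a Young diagram. -/
abbrev MNode (m : ℕ) := Fin m × ℕ × ℕ

/-- `pos : Fin n → MNode m` describes a standard `m`-tableau of shape
`μ : Fin m → YoungDiagram` when: every value is a cell of the corresponding diagram;
`pos` is injective; and entries increase (left to right) along rows and down columns,
i.e. if `pos j` is in the same component and row (resp. column) as `pos i` and strictly
to the right (resp. below), then `i < j`.  Here `pos i` is the `m`-node containing the
entry `i+1` (1-based). -/
def IsStdTabFun (m n : ℕ) (μ : Fin m → YoungDiagram) (pos : Fin n → MNode m) : Prop :=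
  (∀ i, ((pos i).2.1, (pos i).2.2) ∈ μ (pos i).1) ∧
  Function.Injective pos ∧
  (∀ i j : Fin n, (pos i).1 = (pos j).1 → (pos i).2.1 = (pos j).2.1 →
      (pos i).2.2 < (pos j).2.2 → i < j) ∧
  (∀ i j : Fin n, (pos i).1 = (pos j).1 → (pos i).2.2 = (pos j).2.2 →
      (pos i).2.1 < (pos j).2.1 → i < j)

/-- The type of standard `m`-tableaux of shape `μ` with entries `1, …, n`. -/
def StdTab (m n : ℕ) (μ : Fin m → YoungDiagram) :=
  { pos : Fin n → MNode m // IsStdTabFun m n μ pos }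

/-- The content `c(X|i) = v_k q^{2(s−r)}` of the entry `i` of a standard `m`-tableau,
where `i` sits in row `r`, column `s` of the `k`-th diagram. -/
def content {m n : ℕ} (q : ℂ) (v : Fin m → ℂ) {μ : Fin m → YoungDiagram}
    (X : StdTab m n μ) (i : Fin n) : ℂ :=
  v (X.val i).1 * q ^ (2 * (((X.val i).2.2 : ℤ) - ((X.val i).2.1 : ℤ)))

/-- The `m`-node `α = (k, r, c)` is a removable node of the `m`-partition `μ`. -/
def IsRemovable {m : ℕ} (μ : Fin m → YoungDiagram) (α : MNode m) : Prop :=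
  (α.2.1, α.2.2) ∈ μ α.1 ∧ (α.2.1 + 1, α.2.2) ∉ μ α.1 ∧ (α.2.1, α.2.2 + 1) ∉ μ α.1

/-- `ν = μ ∖ {α}`: the `m`-partition obtained from `μ` by removing the `m`-node `α`. -/
def RemovedShape {m : ℕ} (μ ν : Fin m → YoungDiagram) (α : MNode m) : Prop :=
  (ν α.1).cells = (μ α.1).cells.erase (α.2.1, α.2.2) ∧ ∀ k, k ≠ α.1 → ν k = μ k

end CHA

namespace YoungDiagram

theorem ext_rowLen {μ ν : YoungDiagram} (h : ∀ i, μ.rowLen i = ν.rowLen i) : μ = ν := by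
  ext ⟨i, j⟩
  simp only [mem_cells, mem_iff_lt_rowLen, h]

theorem rowLen_eq_of_forall_mem_iff {μ : YoungDiagram} {i L : ℕ}
    (h : ∀ j, (i, j) ∈ μ ↔ j < L) : μ.rowLen i = L := by
  have h₁ : ¬ L < μ.rowLen i := fun hlt => lt_irrefl L ((h L).1 (mem_iff_lt_rowLen.2 hlt))
  have h₂ : ¬ μ.rowLen i < L := fun hlt => lt_irrefl _ (mem_iff_lt_rowLen.1 ((h _).2 hlt))
  omega

theorem rowLen_ofRowLens_getD (w : List ℕ) (hw : w.SortedGE) (i : ℕ) :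
    (ofRowLens w hw).rowLen i = w.getD i 0 := by
  rcases lt_or_ge i w.length with h | h
  · rw [List.getD_eq_getElem _ _ h]
    exact rowLen_ofRowLens ⟨i, h⟩
  · simp [rowLen, mem_ofRowLens, h]

theorem eq_ofRowLens_of_rowLen_eq {μ : YoungDiagram} {w : List ℕ} (hw : w.SortedGE)
    (h : ∀ i ≤ w.length, μ.rowLen i = w.getD i 0) : μ = ofRowLens w hw := by
  refine ext_rowLen fun i => ?_
  rw [rowLen_ofRowLens_getD]
  rcases le_or_gt i w.length with hi | hi
  · exact h i hi
  · have h₁ := μ.rowLen_anti _ _ hi.le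
    have h₂ := h _ le_rfl
    rw [List.getD_eq_default _ _ le_rfl] at h₂
    rw [List.getD_eq_default _ _ hi.le]
    omega

theorem cells_nonempty_iff_rowLen_pos {μ : YoungDiagram} : μ.cells.Nonempty ↔ 0 < μ.rowLen 0 := by
  rw [← mem_iff_lt_rowLen]
  exact ⟨fun ⟨⟨i, j⟩, h⟩ => μ.up_left_mem (Nat.zero_le i) (Nat.zero_le j) ((mem_cells _).1 h),
    fun h => ⟨(0, 0), (mem_cells _).2 h⟩⟩

theorem cells_eq_empty_iff_rowLen_eq_zero {μ : YoungDiagram} :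
    μ.cells = ∅ ↔ μ.rowLen 0 = 0 := by
  rw [← Finset.not_nonempty_iff_eq_empty, cells_nonempty_iff_rowLen_pos, Nat.pos_iff_ne_zero,
    not_not]

theorem card_le_mul_of_rowLen {μ : YoungDiagram} {a b : ℕ} (hb : μ.rowLen 0 ≤ b)
    (ha : μ.rowLen a = 0) : μ.card ≤ a * b := by
  calc μ.card ≤ (Finset.range a ×ˢ Finset.range b).card := by
        refine Finset.card_le_card fun ⟨i, j⟩ hij => ?_
        rw [mem_cells, mem_iff_lt_rowLen] at hij
        have := μ.rowLen_anti 0 i (Nat.zero_le i)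
        have : ¬ a ≤ i := fun h => by have := μ.rowLen_anti _ _ h; omega
        simp only [Finset.mem_product, Finset.mem_range]
        omega
    _ = a * b := by simp

theorem exists_rowLen_succ_lt {μ : YoungDiagram} {i : ℕ} (h : 0 < μ.rowLen i) :
    ∃ r, i ≤ r ∧ μ.rowLen r = μ.rowLen i ∧ μ.rowLen (r + 1) < μ.rowLen i := by
  have hi : i < μ.colLen (μ.rowLen i - 1) := mem_iff_lt_colLen.1 (mem_iff_lt_rowLen.2 (by omega))
  set r := μ.colLen (μ.rowLen i - 1) - 1
  have hr : (r, μ.rowLen i - 1) ∈ μ := mem_iff_lt_colLen.2 (by omega)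
  have hr' : (r + 1, μ.rowLen i - 1) ∉ μ := fun h => by have := mem_iff_lt_colLen.1 h; omega
  rw [mem_iff_lt_rowLen] at hr hr'
  have := μ.rowLen_anti i r (by omega)
  exact ⟨r, by omega, by omega, by omega⟩

theorem exists_cells_eq_erase {μ : YoungDiagram} {r c : ℕ} (hr : (r + 1, c) ∉ μ)
    (hc : (r, c + 1) ∉ μ) : ∃ ν : YoungDiagram, ν.cells = μ.cells.erase (r, c) := by
  refine ⟨⟨μ.cells.erase (r, c), ?_⟩, rfl⟩
  rw [Finset.coe_erase]
  refine μ.isLowerSet.erase fun ⟨i, j⟩ hij hle => ?_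
  obtain ⟨hi, hj⟩ := Prod.mk_le_mk.1 hle
  rcases hi.lt_or_eq with hi | rfl
  · exact absurd (μ.up_left_mem hi hj hij) hr
  rcases hj.lt_or_eq with hj | rfl
  · exact absurd (μ.up_left_mem le_rfl hj hij) hc
  rfl

end YoungDiagram

theorem Set.subset_of_diff_singleton_eq {X : Type*} {M L : Set X} {a₁ a₂ b₁ b₂ : X}
    (hb : b₁ ≠ b₂) (h₁ : M \ {b₁} = L \ {a₁}) (h₂ : M \ {b₂} = L \ {a₂}) : M ⊆ L := by
  intro x hx
  by_cases hx₁ : x = b₁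
  · have hx₂ : x ∈ M \ {b₂} := ⟨hx, hx₁ ▸ hb⟩
    exact (h₂ ▸ hx₂).1
  · have hx₁ : x ∈ M \ {b₁} := ⟨hx, hx₁⟩
    exact (h₁ ▸ hx₁).1

theorem Set.eq_of_diff_singleton_eq {X : Type*} {M L : Set X} {a₁ a₂ b₁ b₂ : X}
    (hb₁ : b₁ ∈ M) (hb : b₁ ≠ b₂) (h₁ : M \ {b₁} = L \ {a₁}) (h₂ : M \ {b₂} = L \ {a₂}) :
    M = L := by
  have ha : a₁ ≠ a₂ := by
    rintro rfl
    have : b₁ ∈ M \ {b₂} := ⟨hb₁, hb⟩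
    rw [h₂, ← h₁] at this
    exact this.2 rfl
  exact (Set.subset_of_diff_singleton_eq hb h₁ h₂).antisymm
    (Set.subset_of_diff_singleton_eq ha h₁.symm h₂.symm)

namespace CHA

open YoungDiagram Function

section

variable {m : ℕ}

theorem isRemovable_iff {μ : Fin m → YoungDiagram} {k : Fin m} {r c : ℕ} :
    IsRemovable μ (k, r, c) ↔ (μ k).rowLen r = c + 1 ∧ (μ k).rowLen (r + 1) ≤ c := by
  simp only [IsRemovable, mem_iff_lt_rowLen]
  omega

theorem isRemovable_of_rowLen_lt {μ : Fin m → YoungDiagram} {k : Fin m} {r : ℕ}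
    (h : (μ k).rowLen (r + 1) < (μ k).rowLen r) : IsRemovable μ (k, r, (μ k).rowLen r - 1) :=
  isRemovable_iff.2 ⟨by omega, by omega⟩

theorem exists_removedShape {μ : Fin m → YoungDiagram} {α : MNode m} (h : IsRemovable μ α) :
    ∃ ν, RemovedShape μ ν α := by
  obtain ⟨ρ, hρ⟩ := exists_cells_eq_erase h.2.1 h.2.2
  exact ⟨update μ α.1 ρ, by rw [update_self, hρ], fun k hk => update_of_ne hk _ _⟩

theorem RemovedShape.rowLen_eq {μ ν : Fin m → YoungDiagram} {k : Fin m} {r c : ℕ}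
    (h : RemovedShape μ ν (k, r, c)) (hα : IsRemovable μ (k, r, c)) :
    (ν k).rowLen = update (μ k).rowLen r c := by
  obtain ⟨hr, hr'⟩ := isRemovable_iff.1 hα
  funext i
  refine rowLen_eq_of_forall_mem_iff fun j => ?_
  rw [← mem_cells, h.1, Finset.mem_erase, mem_cells, mem_iff_lt_rowLen, update_apply]
  split_ifs with hi
  · subst hi
    simp only [ne_eq, Prod.mk.injEq, true_and]
    omega
  · simp [hi]

theorem RemovedShape.card_eq {μ ν : Fin m → YoungDiagram} {α : MNode m}
    (h : RemovedShape μ ν α) (hα : IsRemovable μ α) : (ν α.1).card = (μ α.1).card - 1 := by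
  rw [YoungDiagram.card, h.1, Finset.card_erase_of_mem ((mem_cells _).2 hα.1)]

def nodes (μ : Fin m → YoungDiagram) : Set (MNode m) :=
  {x | (x.2.1, x.2.2) ∈ μ x.1}

theorem nodes_injective : Injective (nodes (m := m)) := by
  intro μ ν h
  funext k
  ext ⟨i, j⟩
  exact Set.ext_iff.1 h (k, i, j)

theorem RemovedShape.nodes_eq {μ ν : Fin m → YoungDiagram} {α : MNode m}
    (h : RemovedShape μ ν α) : nodes ν = nodes μ \ {α} := by
  ext ⟨k, i, j⟩
  by_cases hk : k = α.1
  · subst hk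
    simp only [nodes, Set.mem_ofPred_eq, Set.mem_sdiff, Set.mem_singleton_iff, ← mem_cells, h.1,
      Finset.mem_erase]
    aesop
  · simp only [nodes, Set.mem_ofPred_eq, Set.mem_sdiff, Set.mem_singleton_iff, h.2 k hk]
    exact ⟨fun hx => ⟨hx, fun he => hk (congrArg Prod.fst he)⟩, And.left⟩

theorem RemovedShape.shape_eq {μ ν ν' : Fin m → YoungDiagram} {α : MNode m}
    (h : RemovedShape μ ν α) (h' : RemovedShape μ ν' α) : ν = ν' :=
  nodes_injective (h.nodes_eq.trans h'.nodes_eq.symm)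

theorem RemovedShape.node_eq {μ ν : Fin m → YoungDiagram} {α β : MNode m}
    (hα : IsRemovable μ α) (h : RemovedShape μ ν α) (h' : RemovedShape μ ν β) : α = β := by
  by_contra hne
  have : α ∈ nodes μ \ {β} := ⟨hα.1, hne⟩
  rw [← h'.nodes_eq, h.nodes_eq] at this
  exact this.2 rfl

def children (μ : Fin m → YoungDiagram) : Set (Fin m → YoungDiagram) :=
  {ν | ∃ α, IsRemovable μ α ∧ RemovedShape μ ν α}

theorem children_inter_subsingleton {μ μ' : Fin m → YoungDiagram} (h : μ ≠ μ') :
    (children μ ∩ children μ').Subsingleton := by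
  rintro ν₁ ⟨⟨β₁, hβ₁, h₁⟩, ⟨α₁, -, h₁'⟩⟩ ν₂ ⟨⟨β₂, -, h₂⟩, ⟨α₂, -, h₂'⟩⟩
  by_contra hne
  have hβ : β₁ ≠ β₂ := by
    rintro rfl
    exact hne (h₁.shape_eq h₂)
  exact h (nodes_injective (Set.eq_of_diff_singleton_eq hβ₁.1 hβ
    (h₁.nodes_eq.symm.trans h₁'.nodes_eq) (h₂.nodes_eq.symm.trans h₂'.nodes_eq)))

theorem isRemovable_unique_of_children_subset {ρ μ : Fin m → YoungDiagram} (hne : ρ ≠ μ)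
    (hsub : children ρ ⊆ children μ) {β β' : MNode m} (hβ : IsRemovable ρ β)
    (hβ' : IsRemovable ρ β') : β = β' := by
  obtain ⟨ν, hν⟩ := exists_removedShape hβ
  obtain ⟨ν', hν'⟩ := exists_removedShape hβ'
  have hc : ν ∈ children ρ := ⟨β, hβ, hν⟩
  have hc' : ν' ∈ children ρ := ⟨β', hβ', hν'⟩
  obtain rfl : ν = ν' := children_inter_subsingleton hne ⟨hc, hsub hc⟩ ⟨hc', hsub hc'⟩
  exact hν.node_eq hβ hν'

/-- Row lengths of the rectangle with `a + 1` rows of length `c + 1`, i.e. with corner `(a, c)`. -/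
def rectRowLen (a c i : ℕ) : ℕ :=
  if i ≤ a then c + 1 else 0

def IsRect (ρ : Fin m → YoungDiagram) (k : Fin m) (a c : ℕ) : Prop :=
  ∀ k', (ρ k').rowLen = if k' = k then rectRowLen a c else 0

theorem isRect_of_forall_isRemovable_eq {ρ : Fin m → YoungDiagram} {k : Fin m} {a c : ℕ}
    (hβ : IsRemovable ρ (k, a, c)) (h : ∀ β, IsRemovable ρ β → β = (k, a, c)) :
    IsRect ρ k a c := by
  obtain ⟨ha, -⟩ := isRemovable_iff.1 hβ
  have hpos : ∀ k' i, 0 < (ρ k').rowLen i → k' = k ∧ i ≤ a ∧ (ρ k').rowLen i = c + 1 := by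
    intro k' i hi
    obtain ⟨r, hir, hr, hlt⟩ := exists_rowLen_succ_lt hi
    have hβ' := h _ (isRemovable_of_rowLen_lt (k := k') (by omega : (ρ k').rowLen (r + 1) < _))
    simp only [Prod.mk.injEq] at hβ'
    obtain ⟨rfl, rfl, hc⟩ := hβ'
    exact ⟨rfl, hir, by omega⟩
  intro k'
  funext i
  split_ifs with hk
  · subst hk
    unfold rectRowLen
    split_ifs with hi
    · have := (ρ k').rowLen_anti i a hi
      exact (hpos _ _ (by omega)).2.2
    · by_contra hne
      exact hi (hpos _ _ (Nat.pos_of_ne_zero hne)).2.1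
  · by_contra hne
    exact hk (hpos _ _ (Nat.pos_of_ne_zero hne)).1

theorem IsRect.isRemovable {ρ : Fin m → YoungDiagram} {k : Fin m} {a c : ℕ}
    (h : IsRect ρ k a c) : IsRemovable ρ (k, a, c) :=
  isRemovable_iff.2 (by simp [h k, rectRowLen])

theorem IsRect.rowLen_of_removedShape {ρ ν : Fin m → YoungDiagram} {k : Fin m} {a c : ℕ}
    (h : IsRect ρ k a c) (hν : RemovedShape ρ ν (k, a, c)) (k' : Fin m) :
    (ν k').rowLen = if k' = k then update (rectRowLen a c) a c else 0 := by
  split_ifs with hk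
  · subst hk
    rw [hν.rowLen_eq h.isRemovable, h k', if_pos rfl]
  · rw [hν.2 k' hk, h k', if_neg hk]

theorem apply_eq_of_update_eq_update_rectRowLen {f : ℕ → ℕ} {r a c : ℕ} (hr : 0 < f r)
    (h : update f r (f r - 1) = update (rectRowLen a c) a c) (i : ℕ) :
    f i = (if i = r then 1 else 0) + if i = a then c else if i ≤ a then c + 1 else 0 := by
  have hi := congrFun h i
  simp only [update_apply, rectRowLen] at hi
  rcases eq_or_ne i r with rfl | hir
  · simp only [if_true] at hi ⊢
    split_ifs at hi ⊢ <;> omega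
  · simp only [hir, if_false, zero_add] at hi ⊢
    exact hi

/-- `f` is the rectangle with its corner box moved to the end of the first row (`r = 0`) or to the
bottom of the first column (`r = a + 1`). -/
theorem rowLen_cases_of_update_eq {f : ℕ → ℕ} (hf : Antitone f) {r : ℕ} (hr : f (r + 1) < f r)
    (h : ∃ a c, f ≠ rectRowLen a c ∧ update f r (f r - 1) = update (rectRowLen a c) a c) :
    ∃ a c, (r = 0 ∧ 1 ≤ a ∧ f 0 = c + 2 ∧ (∀ i, 0 < i → i < a → f i = c + 1) ∧ f a = c ∧
        ∀ i, a < i → f i = 0) ∨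
      (r = a + 1 ∧ (∀ i, i < a → f i = c + 1) ∧ f a = c ∧ f (a + 1) = 1 ∧
        ∀ i, a + 1 < i → f i = 0) := by
  obtain ⟨a, c, hne, h⟩ := h
  have hf' := apply_eq_of_update_eq_update_rectRowLen (by omega) h
  refine ⟨a, c, ?_⟩
  -- otherwise `r = a`, and `f` would be the rectangle itself
  have hr : (r = 0 ∧ 1 ≤ a) ∨ r = a + 1 := by
    by_contra hcon
    refine hne (funext fun i => ?_)
    have h₁ := hf' i
    have h₂ := hf' r
    have h₃ := hf' (r - 1)
    have h₄ := hf (Nat.sub_le r 1)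
    unfold rectRowLen
    split_ifs at h₁ h₂ h₃ ⊢ <;> omega
  rcases hr with ⟨rfl, ha⟩ | rfl
  · refine Or.inl ⟨rfl, ha, ?_, fun i h₀ ha => ?_, ?_, fun i ha => ?_⟩
    · have := hf' 0
      split_ifs at this <;> omega
    · have := hf' i
      split_ifs at this <;> omega
    · have := hf' a
      split_ifs at this <;> omega
    · have := hf' i
      split_ifs at this <;> omega
  · refine Or.inr ⟨rfl, fun i ha => ?_, ?_, ?_, fun i ha => ?_⟩
    · have := hf' i
      split_ifs at this <;> omega
    · have := hf' a
      split_ifs at this <;> omega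
    · have := hf' (a + 1)
      split_ifs at this <;> omega
    · have := hf' i
      split_ifs at this <;> omega

theorem eq_ofRowLens_of_forall_rowLen_succ_lt {μ : YoungDiagram} (hcard : 3 ≤ μ.card)
    (h : ∀ r, μ.rowLen (r + 1) < μ.rowLen r → ∃ a c, μ.rowLen ≠ rectRowLen a c ∧
      update μ.rowLen r (μ.rowLen r - 1) = update (rectRowLen a c) a c) :
    μ = ofRowLens [2, 1] (by decide) ∨ μ = ofRowLens [2, 1, 1] (by decide) ∨
      μ = ofRowLens [3, 1] (by decide) := by
  have hanti : Antitone μ.rowLen := fun i j hij => μ.rowLen_anti i j hij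
  have hbig₁ : ¬ (μ.rowLen 0 ≤ 2 ∧ μ.rowLen 1 = 0) := fun ⟨h₀, h₁⟩ => by
    have := card_le_mul_of_rowLen h₀ h₁
    omega
  have hbig₂ : ¬ (μ.rowLen 0 ≤ 1 ∧ μ.rowLen 2 = 0) := fun ⟨h₀, h₂⟩ => by
    have := card_le_mul_of_rowLen h₀ h₂
    omega
  have key := fun r hr => rowLen_cases_of_update_eq hanti hr (h r hr)
  obtain ⟨r, -, hr, hr'⟩ := exists_rowLen_succ_lt (μ := μ) (i := 0) (by
    have := hanti (Nat.zero_le 1)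
    omega)
  obtain ⟨a, c, ⟨rfl, ha, h₀, hmid, ha', hout⟩ | ⟨rfl, hlow, ha', ha'', hout⟩⟩ :=
    key r (hr ▸ hr')
  · rcases ha.eq_or_lt with rfl | ha
    · -- `μ = (c + 2, c)`: its second corner is in the first column, so `c = 1`
      have h₂ := hout 2 one_lt_two
      obtain ⟨a', c', ⟨h₁, -⟩ | ⟨h₁, -, -, h₁', -⟩⟩ :=
        key 1 (show μ.rowLen 2 < μ.rowLen 1 by omega)
      · omega
      obtain rfl : a' = 0 := by omega
      rw [zero_add] at h₁'
      right; right
      refine eq_ofRowLens_of_rowLen_eq _ fun i hi => ?_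
      simp only [List.length_cons, List.length_nil] at hi
      interval_cases i <;> simp <;> omega
    · -- `μ = (c + 2, (c + 1) ^ (a - 1), c)`: its corner in row `a - 1` is in the first column,
      -- so `c = 0`, and then that column has at most three boxes
      obtain ⟨b, rfl⟩ : ∃ b, a = b + 1 := ⟨a - 1, by omega⟩
      have hb := hmid b (by omega) (by omega)
      obtain ⟨a', c', ⟨h₁, -⟩ | ⟨rfl, hlow, -, hb', -⟩⟩ := key b (by omega)
      · omega
      have h₁ := hmid 1 (by omega) (by omega)
      rcases a' with _ | _ | a'
      · simp only [Nat.zero_add, Nat.reduceAdd] at ha' hb'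
        left
        refine eq_ofRowLens_of_rowLen_eq _ fun i hi => ?_
        simp only [List.length_cons, List.length_nil] at hi
        interval_cases i <;> simp <;> omega
      · simp only [Nat.zero_add, Nat.reduceAdd] at ha' hb'
        have h₂ := hmid 2 (by omega) (by omega)
        right; left
        refine eq_ofRowLens_of_rowLen_eq _ fun i hi => ?_
        simp only [List.length_cons, List.length_nil] at hi
        interval_cases i <;> simp <;> omega
      · have := hlow 0 (by omega)
        have := hlow 1 (by omega)
        omega
  · -- the first corner is in the first column, so `μ` is a column with at most two boxes
    rcases Nat.eq_zero_or_pos a with rfl | ha₀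
    · have := hout 2
      omega
    · have := hlow 0 ha₀
      have := hanti (Nat.le_add_right a 1)
      omega

def EveryChildHasRectParent (μ : Fin m → YoungDiagram) : Prop :=
  ∀ ν ∈ children μ, ∃ ρ k a c, ρ ≠ μ ∧ IsRect ρ k a c ∧ RemovedShape ρ ν (k, a, c)

theorem everyChildHasRectParent_of_children_eq_iUnion {l : ℕ} {μ : Fin m → YoungDiagram}
    {Λ : Fin l → Fin m → YoungDiagram} (hΛ : ∀ j, Λ j ≠ μ)
    (h : children μ = ⋃ j, children (Λ j)) : EveryChildHasRectParent μ := by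
  intro ν hν
  rw [h, Set.mem_iUnion] at hν
  obtain ⟨j, ⟨k, a, c⟩, hβ, hν⟩ := hν
  refine ⟨Λ j, k, a, c, hΛ j, isRect_of_forall_isRemovable_eq hβ fun β hβ' => ?_, hν⟩
  exact isRemovable_unique_of_children_subset (hΛ j)
    (h ▸ Set.subset_iUnion (fun i => children (Λ i)) j) hβ' hβ

theorem EveryChildHasRectParent.card_eq_one {μ : Fin m → YoungDiagram}
    (hμ : EveryChildHasRectParent μ) {a b : Fin m} (hab : a ≠ b) (ha : (μ a).cells.Nonempty)
    (hb : (μ b).cells.Nonempty) : (μ a).card = 1 ∧ ∀ k, k ≠ a → k ≠ b → (μ k).cells = ∅ := by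
  obtain ⟨r, -, hr, hr'⟩ := exists_rowLen_succ_lt (cells_nonempty_iff_rowLen_pos.1 ha)
  have hα := isRemovable_of_rowLen_lt (μ := μ) (k := a) (r := r) (by omega)
  obtain ⟨ν, hν⟩ := exists_removedShape hα
  obtain ⟨ρ, k, a', c, -, hρ, hρν⟩ := hμ ν ⟨_, hα, hν⟩
  have hrow := hρ.rowLen_of_removedShape hρν
  obtain rfl : b = k := by
    by_contra hbk
    have := congrFun (hrow b) 0
    rw [if_neg hbk, hν.2 b hab.symm] at this
    exact (cells_nonempty_iff_rowLen_pos.1 hb).ne' this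
  refine ⟨?_, fun j hja hjb => ?_⟩
  · have h₁ : (ν a).card = (μ a).card - 1 := hν.card_eq hα
    have h₂ : (ν a).card = 0 := by
      rw [YoungDiagram.card, Finset.card_eq_zero, cells_eq_empty_iff_rowLen_eq_zero, hrow a,
        if_neg hab, Pi.zero_apply]
    have h₃ : 0 < (μ a).card := Finset.card_pos.2 ha
    omega
  · rw [cells_eq_empty_iff_rowLen_eq_zero, ← hν.2 j hja, hrow j, if_neg hjb, Pi.zero_apply]

theorem EveryChildHasRectParent.exists_rectRowLen {μ : Fin m → YoungDiagram}
    (hμ : EveryChildHasRectParent μ) {k : Fin m} (hk : ∀ j, j ≠ k → (μ j).cells = ∅)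
    (hcard : 3 ≤ (μ k).card) (r : ℕ) (hr : (μ k).rowLen (r + 1) < (μ k).rowLen r) :
    ∃ a c, (μ k).rowLen ≠ rectRowLen a c ∧
      update (μ k).rowLen r ((μ k).rowLen r - 1) = update (rectRowLen a c) a c := by
  have hα := isRemovable_of_rowLen_lt hr
  obtain ⟨ν, hν⟩ := exists_removedShape hα
  obtain ⟨ρ, k', a, c, hρμ, hρ, hρν⟩ := hμ ν ⟨_, hα, hν⟩
  have hrow := hρ.rowLen_of_removedShape hρν
  obtain rfl : k = k' := by
    by_contra hk'
    have h₁ : (ν k).card = (μ k).card - 1 := hν.card_eq hα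
    have h₂ : (ν k).card = 0 := by
      rw [YoungDiagram.card, Finset.card_eq_zero, cells_eq_empty_iff_rowLen_eq_zero, hrow k,
        if_neg hk', Pi.zero_apply]
    omega
  refine ⟨a, c, fun hf => hρμ (funext fun j => ext_rowLen fun i => ?_), ?_⟩
  · rw [hρ j]
    split_ifs with hj
    · rw [hj, hf]
    · have h₀ := cells_eq_empty_iff_rowLen_eq_zero.1 (hk j hj)
      have := (μ j).rowLen_anti 0 i i.zero_le
      rw [Pi.zero_apply]
      omega
  · rw [← hν.rowLen_eq hα, hrow k, if_pos rfl]

end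

theorem removed_shapes_distinguish
    (m l : ℕ) (hl : 1 ≤ l)
    (lam : Fin m → YoungDiagram)
    (hi : ¬ ∃ k : Fin m, (∀ j, j ≠ k → (lam j).cells = ∅) ∧
        ((lam k).card ≤ 2 ∨
          lam k = YoungDiagram.ofRowLens [2, 1] (by decide) ∨
          lam k = YoungDiagram.ofRowLens [2, 1, 1] (by decide) ∨
          lam k = YoungDiagram.ofRowLens [3, 1] (by decide)))
    (hii : ¬ ∃ k k' : Fin m, k ≠ k' ∧ (lam k).card = 1 ∧ (lam k').card = 1 ∧
        ∀ j, j ≠ k → j ≠ k' → (lam j).cells = ∅)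
    (Λ : Fin l → Fin m → YoungDiagram)
    (hΛ : ∀ j, Λ j ≠ lam) :
    {ν : Fin m → YoungDiagram | ∃ α, IsRemovable lam α ∧ RemovedShape lam ν α} ≠
      {ν : Fin m → YoungDiagram |
        ∃ (j : Fin l) (α : MNode m), IsRemovable (Λ j) α ∧ RemovedShape (Λ j) ν α} := by
  intro hEq
  rcases Nat.eq_zero_or_pos m with rfl | hm
  · exact hΛ ⟨0, hl⟩ (Subsingleton.elim _ _)
  have hrect : EveryChildHasRectParent lam := everyChildHasRectParent_of_children_eq_iUnion hΛ (by
    rw [children, hEq]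
    ext ν
    simp [children])
  by_cases hsingle : ∃ k, ∀ j, j ≠ k → (lam j).cells = ∅
  · obtain ⟨k, hk⟩ := hsingle
    refine hi ⟨k, hk, ?_⟩
    by_cases hcard : (lam k).card ≤ 2
    · exact Or.inl hcard
    · exact Or.inr (eq_ofRowLens_of_forall_rowLen_succ_lt (by omega)
        (hrect.exists_rectRowLen hk (by omega)))
  · push Not at hsingle
    obtain ⟨a, -, ha⟩ := hsingle ⟨0, hm⟩
    obtain ⟨b, hba, hb⟩ := hsingle a
    obtain ⟨ha₁, hrest⟩ := hrect.card_eq_one hba.symm ha hb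
    exact hii ⟨a, b, hba.symm, ha₁, (hrect.card_eq_one hba hb ha).1, hrest⟩

end CHA
end
end

section
/- For all integers m ≥ 1 and n ≥ 0, the sum, over all m-partitions λ of n, of the square of the number of standard m-tableaux of shape λ equals n!·mⁿ. -/
/-!
Multipartitions, ordered componentwise, form the `m`-th power of Young's lattice, and this is an
`m`-differential poset. Young's lattice is distributive, hence modular, so two distinct elements
have a common upper cover exactly when they have a common lower cover; and a Young diagram has
one more outer corner than inner corners, so a multipartition has `m` more upper covers than
lower covers. Removing the largest entry shows that the number `f μ` of standard tableaux of
shape `μ` satisfies `f μ = ∑_{κ ⋖ μ} f κ`. The commutation relation `DU = UD + m` of a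
differential poset then gives `∑_{ν ⋗ μ} f ν = (|μ| + 1) m f μ` by induction on `|μ|`, and
therefore `∑_{|μ| = n + 1} (f μ)² = (n + 1) m ∑_{|μ| = n} (f μ)²`.
-/

open Classical

noncomputable section

open Finset Function

theorem Finset.sum_sum_eq_sum_card_smul {β γ M : Type*} [AddCommMonoid M] (s : Finset β)
    (t : β → Finset γ) {u : Finset γ} (hu : s.biUnion t ⊆ u) (g : γ → M) :
    ∑ y ∈ s, ∑ z ∈ t y, g z = ∑ z ∈ u, #{y ∈ s | z ∈ t y} • g z := by
  rw [sum_comm' (t' := u) (s' := fun z => {y ∈ s | z ∈ t y})]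
  · simp only [sum_const]
  · intro y z
    simp only [mem_filter]
    exact ⟨fun h => ⟨⟨h.1, h.2⟩, hu (mem_biUnion.2 ⟨y, h⟩)⟩, fun h => h.1⟩

section Differential

variable {α : Type*}

/-- Stanley's `r`-differential posets, with the finite sets of lower and upper covers of each
element given by `down` and `up`. -/
structure IsDifferential [PartialOrder α] (r : ℕ) (down up : α → Finset α) : Prop where
  mem_down {x y : α} : y ∈ down x ↔ y ⋖ x
  mem_up {x y : α} : y ∈ up x ↔ x ⋖ y
  card_up (x : α) : #(up x) = #(down x) + r
  card_up_inter_up {x y : α} : x ≠ y → #(up x ∩ up y) = #(down x ∩ down y)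

theorem CovBy.grade_eq_add_one [Preorder α] [GradeOrder ℕ α] {x y : α} (h : x ⋖ y) :
    grade ℕ y = grade ℕ x + 1 :=
  (Order.covBy_iff_add_one_eq.1 (h.grade ℕ)).symm

theorem CovBy.eq_sup_of_covBy [Lattice α] {x y z : α} (hx : x ⋖ z) (hy : y ⋖ z)
    (hxy : x ≠ y) : z = x ⊔ y := by
  refine ((hx.eq_or_eq le_sup_left (sup_le hx.le hy.le)).resolve_left fun h => ?_).symm
  have hyx : y < x := lt_of_le_of_ne (sup_eq_left.1 h) hxy.symm
  exact hy.2 hyx hx.lt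

theorem IsDifferential.of_isModularLattice [Lattice α] [IsModularLattice α] {r : ℕ}
    {down up : α → Finset α} (mem_down : ∀ {x y}, y ∈ down x ↔ y ⋖ x)
    (mem_up : ∀ {x y}, y ∈ up x ↔ x ⋖ y) (card_up : ∀ x, #(up x) = #(down x) + r) :
    IsDifferential r down up where
  mem_down := mem_down
  mem_up := mem_up
  card_up := card_up
  card_up_inter_up {x y} hxy := by
    -- the only possible common upper cover is `x ⊔ y`, the only possible common lower cover is
    -- `x ⊓ y`, and by modularity one exists iff the other does
    have hup : up x ∩ up y = {z ∈ ({x ⊔ y} : Finset α) | x ⋖ z ∧ y ⋖ z} := by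
      ext z
      simp only [mem_inter, mem_up, mem_filter, mem_singleton]
      exact ⟨fun h => ⟨h.1.eq_sup_of_covBy h.2 hxy, h⟩, And.right⟩
    have hdown : down x ∩ down y = {z ∈ ({x ⊓ y} : Finset α) | z ⋖ x ∧ z ⋖ y} := by
      ext z
      simp only [mem_inter, mem_down, mem_filter, mem_singleton]
      exact ⟨fun h => ⟨(h.1.toDual.eq_sup_of_covBy h.2.toDual hxy :), h⟩, And.right⟩
    have hiff : x ⋖ x ⊔ y ∧ y ⋖ x ⊔ y ↔ x ⊓ y ⋖ x ∧ x ⊓ y ⋖ y :=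
      ⟨fun h => ⟨inf_covBy_of_covBy_sup_of_covBy_sup_left h.1 h.2,
          inf_covBy_of_covBy_sup_of_covBy_sup_right h.1 h.2⟩,
        fun h => ⟨covBy_sup_of_inf_covBy_of_inf_covBy_left h.1 h.2,
          covBy_sup_of_inf_covBy_of_inf_covBy_right h.1 h.2⟩⟩
    rw [hup, hdown, filter_singleton, filter_singleton]
    by_cases h : x ⋖ x ⊔ y ∧ y ⋖ x ⊔ y
    · rw [if_pos h, if_pos (hiff.1 h), card_singleton, card_singleton]
    · rw [if_neg h, if_neg (mt hiff.2 h)]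

namespace IsDifferential

variable [PartialOrder α] {r : ℕ} {down up : α → Finset α}

theorem filter_mem_down (hd : IsDifferential r down up) (s : Finset α) (z : α) :
    {y ∈ s | z ∈ down y} = s ∩ up z := by
  ext y
  simp [hd.mem_down, hd.mem_up]

theorem filter_mem_up (hd : IsDifferential r down up) (s : Finset α) (z : α) :
    {y ∈ s | z ∈ up y} = s ∩ down z := by
  ext y
  simp [hd.mem_down, hd.mem_up]

/-- The commutation relation `DU = UD + r` of the up and down operators. -/
theorem sum_up_sum_down {M : Type*} [AddCommMonoid M] (hd : IsDifferential r down up)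
    (g : α → M) (x : α) :
    ∑ y ∈ up x, ∑ z ∈ down y, g z = r • g x + ∑ y ∈ down x, ∑ z ∈ up y, g z := by
  set u := insert x ((up x).biUnion down ∪ (down x).biUnion up)
  have hx : x ∈ u := mem_insert_self _ _
  rw [sum_sum_eq_sum_card_smul _ _ (u := u) (by intro z; simp +contextual [u]),
    sum_sum_eq_sum_card_smul _ _ (u := u) (by intro z; simp +contextual [u]),
    ← add_sum_erase u _ hx, ← add_sum_erase u _ hx]
  simp only [hd.filter_mem_down, hd.filter_mem_up, inter_self, hd.card_up, add_smul]
  rw [sum_congr rfl fun z hz => by rw [hd.card_up_inter_up (ne_of_mem_erase hz).symm]]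
  abel

variable [GradeOrder ℕ α]

theorem sum_up_eq (hd : IsDifferential r down up) {f : α → ℕ}
    (hf : ∀ x, grade ℕ x ≠ 0 → f x = ∑ y ∈ down x, f y) (x : α) :
    ∑ y ∈ up x, f y = (grade ℕ x + 1) * r * f x := by
  induction hn : grade ℕ x using Nat.strong_induction_on generalizing x with
  | _ n ih =>
  subst hn
  have hdown : grade ℕ x * ∑ y ∈ down x, f y = grade ℕ x * f x := by
    rcases eq_or_ne (grade ℕ x) 0 with h | h
    · rw [h, zero_mul, zero_mul]
    · rw [← hf x h]
  calc ∑ y ∈ up x, f y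
      = ∑ y ∈ up x, ∑ z ∈ down y, f z := sum_congr rfl fun y hy => by
        rw [hf y (by rw [(hd.mem_up.1 hy).grade_eq_add_one]; omega)]
    _ = r * f x + ∑ y ∈ down x, grade ℕ x * r * f y := by
        rw [hd.sum_up_sum_down, smul_eq_mul]
        refine congrArg _ (sum_congr rfl fun y hy => ?_)
        have hxy := (hd.mem_down.1 hy).grade_eq_add_one
        rw [ih _ (by omega) y rfl, ← hxy]
    _ = (grade ℕ x + 1) * r * f x := by
        rw [← mul_sum, mul_right_comm, hdown]
        ring

theorem sum_sq_grade_succ (hd : IsDifferential r down up) {f : α → ℕ}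
    (hf : ∀ x, grade ℕ x ≠ 0 → f x = ∑ y ∈ down x, f y) {S : ℕ → Finset α}
    (hS : ∀ {n x}, x ∈ S n ↔ grade ℕ x = n) (n : ℕ) :
    ∑ x ∈ S (n + 1), f x ^ 2 = (n + 1) * r * ∑ x ∈ S n, f x ^ 2 := by
  calc ∑ x ∈ S (n + 1), f x ^ 2
      = ∑ x ∈ S (n + 1), ∑ y ∈ down x, f x * f y := sum_congr rfl fun x hx => by
        rw [← mul_sum, ← hf x (by rw [hS.1 hx]; omega), sq]
    _ = ∑ y ∈ S n, ∑ x ∈ up y, f x * f y := by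
        refine sum_comm' fun x y => ?_
        rw [hS, hS, hd.mem_down, hd.mem_up]
        exact ⟨fun h => ⟨h.2, by rw [h.2.grade_eq_add_one] at h; omega⟩,
          fun h => ⟨by rw [h.1.grade_eq_add_one, h.2], h.1⟩⟩
    _ = (n + 1) * r * ∑ x ∈ S n, f x ^ 2 := by
        rw [mul_sum]
        refine sum_congr rfl fun y hy => ?_
        rw [← sum_mul, hd.sum_up_eq hf, hS.1 hy, sq, mul_assoc]

theorem sum_sq_grade_eq (hd : IsDifferential r down up) {f : α → ℕ}
    (hf : ∀ x, grade ℕ x ≠ 0 → f x = ∑ y ∈ down x, f y) {S : ℕ → Finset α}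
    (hS : ∀ {n x}, x ∈ S n ↔ grade ℕ x = n) (n : ℕ) :
    ∑ x ∈ S n, f x ^ 2 = n.factorial * r ^ n * ∑ x ∈ S 0, f x ^ 2 := by
  induction n with
  | zero => simp
  | succ n ih =>
    rw [hd.sum_sq_grade_succ hf hS, ih, Nat.factorial_succ, pow_succ]
    ring

end IsDifferential

end Differential

section Pi

variable {ι : Type*} [Fintype ι] {α : ι → Type*}

instance Pi.gradeOrder [∀ i, PartialOrder (α i)] [∀ i, GradeOrder ℕ (α i)] :
    GradeOrder ℕ (∀ i, α i) where
  grade x := ∑ i, grade ℕ (x i)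
  grade_strictMono x y h := by
    obtain ⟨hle, i, hi⟩ := Pi.lt_def.1 h
    exact sum_lt_sum (fun j _ => grade_mono (hle j)) ⟨i, mem_univ i, grade_strictMono hi⟩
  covBy_grade x y h := by
    obtain ⟨i, hi, heq⟩ := Pi.covBy_iff.1 h
    rw [Order.covBy_iff_add_one_eq, ← add_sum_erase _ _ (mem_univ i),
      ← add_sum_erase _ _ (mem_univ i), hi.grade_eq_add_one,
      sum_congr rfl fun j hj => by rw [heq j (ne_of_mem_erase hj)]]
    ring

theorem Pi.grade_apply [∀ i, PartialOrder (α i)] [∀ i, GradeOrder ℕ (α i)]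
    (x : ∀ i, α i) : grade ℕ x = ∑ i, grade ℕ (x i) := rfl

variable [DecidableEq ι]

def updates (x : ∀ i, α i) (s : ∀ i, Finset (α i)) : Finset (∀ i, α i) :=
  (univ.sigma s).image fun p => update x p.1 p.2

theorem mem_updates {x y : ∀ i, α i} {s : ∀ i, Finset (α i)} :
    y ∈ updates x s ↔ ∃ i, ∃ z ∈ s i, update x i z = y := by
  simp [updates]

theorem sum_updates {M : Type*} [AddCommMonoid M] {x : ∀ i, α i} {s : ∀ i, Finset (α i)}
    (hs : ∀ i, x i ∉ s i) (g : (∀ i, α i) → M) :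
    ∑ y ∈ updates x s, g y = ∑ i, ∑ z ∈ s i, g (update x i z) := by
  rw [updates, sum_image, sum_sigma]
  rintro ⟨i, z⟩ hz ⟨j, w⟩ - h
  simp only [coe_sigma, Set.mem_sigma_iff, mem_coe] at hz h
  obtain rfl : i = j := by
    by_contra hij
    have := congrFun h i
    rw [update_self, update_of_ne hij] at this
    exact hs i (this ▸ hz.2)
  simpa using congrFun h i

theorem card_updates {x : ∀ i, α i} {s : ∀ i, Finset (α i)} (hs : ∀ i, x i ∉ s i) :
    #(updates x s) = ∑ i, #(s i) := by
  simpa only [card_eq_sum_ones] using sum_updates hs fun _ => 1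

theorem IsDifferential.pi [∀ i, DistribLattice (α i)] {r : ι → ℕ}
    {down up : ∀ i, α i → Finset (α i)} (hd : ∀ i, IsDifferential (r i) (down i) (up i)) :
    IsDifferential (∑ i, r i) (fun x => updates x fun i => down i (x i))
      (fun x => updates x fun i => up i (x i)) :=
  .of_isModularLattice
    (by
      intro x y
      simp only [mem_updates, (hd _).mem_down, Pi.covBy_iff_exists_left_eq, eq_comm])
    (by
      intro x y
      simp only [mem_updates, (hd _).mem_up, Pi.covBy_iff_exists_right_eq, eq_comm])
    (fun x => by
      rw [card_updates, card_updates, ← sum_add_distrib]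
      · exact sum_congr rfl fun i _ => (hd i).card_up (x i)
      · exact fun i h => ((hd i).mem_down.1 h).lt.false
      · exact fun i h => ((hd i).mem_up.1 h).lt.false)

end Pi

theorem IsLowerSet.insert_of_forall_lt {α : Type*} [PartialOrder α] {s : Set α} {a : α}
    (hs : IsLowerSet s) (ha : ∀ b < a, b ∈ s) : IsLowerSet (insert a s) := by
  rintro x y hyx (rfl | hx)
  · exact (eq_or_lt_of_le hyx).imp id (ha y)
  · exact Or.inr (hs hyx hx)

namespace YoungDiagram

variable {ν κ : YoungDiagram} {c : ℕ × ℕ}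

def insertCell (ν : YoungDiagram) (c : ℕ × ℕ) : YoungDiagram :=
  if hc : Minimal (· ∉ ν) c then
    ⟨insert c ν.cells, by
      rw [coe_insert]
      exact ν.isLowerSet.insert_of_forall_lt fun b hb => by_contra fun h => hc.not_lt h hb⟩
  else ν

def eraseCell (ν : YoungDiagram) (c : ℕ × ℕ) : YoungDiagram :=
  if hc : Maximal (· ∈ ν) c then
    ⟨ν.cells.erase c, by
      rw [coe_erase]
      exact ν.isLowerSet.erase fun b hb hcb => (hc.eq_of_le hb hcb).symm⟩
  else ν

theorem cells_insertCell (hc : Minimal (· ∉ ν) c) :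
    (ν.insertCell c).cells = insert c ν.cells := by
  rw [insertCell, dif_pos hc]

theorem cells_eraseCell (hc : Maximal (· ∈ ν) c) :
    (ν.eraseCell c).cells = ν.cells.erase c := by
  rw [eraseCell, dif_pos hc]

theorem mem_eraseCell (hc : Maximal (· ∈ ν) c) {b : ℕ × ℕ} :
    b ∈ ν.eraseCell c ↔ b ≠ c ∧ b ∈ ν := by
  rw [← mem_cells, cells_eraseCell hc, mem_erase, mem_cells]

theorem covBy_of_le_of_card_eq (h : κ ≤ ν) (hcard : ν.card = κ.card + 1) : κ ⋖ ν := by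
  simp only [YoungDiagram.card] at hcard
  refine ⟨lt_of_le_of_ne h fun he => by rw [he] at hcard; omega, fun ξ h₁ h₂ => ?_⟩
  have := card_lt_card (cells_ssubset_iff.2 h₁)
  have := card_lt_card (cells_ssubset_iff.2 h₂)
  omega

theorem covBy_iff_exists_insertCell :
    ν ⋖ κ ↔ ∃ c, Minimal (· ∉ ν) c ∧ ν.insertCell c = κ := by
  constructor
  · intro h
    -- a minimal cell of `κ \ ν` can be added to `ν`, giving a diagram between `ν` and `κ`
    obtain ⟨c, hc⟩ := Finset.exists_minimal
      (sdiff_nonempty.2 fun hsub => h.lt.not_ge (cells_subset_iff.1 hsub) :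
        (κ.cells \ ν.cells).Nonempty)
    have hcκ : c ∈ κ := (mem_cells _).1 (mem_sdiff.1 hc.prop).1
    have hc' : Minimal (· ∉ ν) c := ⟨fun h' => (mem_sdiff.1 hc.prop).2 ((mem_cells _).2 h'),
      fun b hb hbc => hc.2 (mem_sdiff.2
        ⟨(mem_cells _).2 (κ.isLowerSet hbc hcκ), mt (mem_cells _).1 hb⟩) hbc⟩
    have hle : ν.insertCell c ≤ κ := by
      rw [← cells_subset_iff, cells_insertCell hc', insert_subset_iff, mem_cells,
        cells_subset_iff]
      exact ⟨hcκ, h.le⟩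
    refine ⟨c, hc', (h.eq_or_eq ?_ hle).resolve_left fun he => hc'.prop ?_⟩
    · rw [← cells_subset_iff, cells_insertCell hc']
      exact subset_insert _ _
    · rw [← he, ← mem_cells, cells_insertCell hc']
      exact mem_insert_self _ _
  · rintro ⟨c, hc, rfl⟩
    refine covBy_of_le_of_card_eq ?_ ?_
    · rw [← cells_subset_iff, cells_insertCell hc]
      exact subset_insert _ _
    · rw [YoungDiagram.card, cells_insertCell hc,
        card_insert_of_notMem (mt (mem_cells _).1 hc.prop)]

theorem covBy_iff_exists_eraseCell :
    κ ⋖ ν ↔ ∃ c, Maximal (· ∈ ν) c ∧ ν.eraseCell c = κ := by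
  constructor
  · intro h
    obtain ⟨c, hc, rfl⟩ := covBy_iff_exists_insertCell.1 h
    have hmem : ∀ {b}, b ∈ κ.insertCell c ↔ b = c ∨ b ∈ κ := by
      intro b
      rw [← mem_cells, cells_insertCell hc, mem_insert, mem_cells]
    have hc' : Maximal (· ∈ κ.insertCell c) c := ⟨hmem.2 (Or.inl rfl), fun b hb hcb =>
      (hmem.1 hb).elim (fun h => h.le) fun hbκ => absurd (κ.isLowerSet hcb hbκ) hc.prop⟩
    refine ⟨c, hc', YoungDiagram.ext ?_⟩
    rw [cells_eraseCell hc', cells_insertCell hc, erase_insert (mt (mem_cells _).1 hc.prop)]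
  · rintro ⟨c, hc, rfl⟩
    refine covBy_of_le_of_card_eq ?_ ?_
    · rw [← cells_subset_iff, cells_eraseCell hc]
      exact erase_subset _ _
    · rw [YoungDiagram.card, YoungDiagram.card, cells_eraseCell hc,
        card_erase_add_one ((mem_cells _).2 hc.prop)]

theorem card_eq_of_covBy (h : κ ⋖ ν) : ν.card = κ.card + 1 := by
  obtain ⟨c, hc, rfl⟩ := covBy_iff_exists_insertCell.1 h
  rw [YoungDiagram.card, cells_insertCell hc, card_insert_of_notMem (mt (mem_cells _).1 hc.prop)]

instance : GradeOrder ℕ YoungDiagram where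
  grade := YoungDiagram.card
  grade_strictMono _ _ h := card_lt_card (cells_ssubset_iff.2 h)
  covBy_grade _ _ h := Order.covBy_iff_add_one_eq.2 (card_eq_of_covBy h).symm

theorem grade_eq_card (ν : YoungDiagram) : grade ℕ ν = ν.card := rfl

theorem maximal_mem_iff :
    Maximal (· ∈ ν) c ↔ c ∈ ν ∧ (c.1 + 1, c.2) ∉ ν ∧ (c.1, c.2 + 1) ∉ ν := by
  obtain ⟨i, j⟩ := c
  refine ⟨fun h => ⟨h.prop, fun h' => h.not_gt h' (by simp [Prod.lt_iff]),
    fun h' => h.not_gt h' (by simp [Prod.lt_iff])⟩, fun ⟨hc, hdown, hright⟩ => ⟨hc, ?_⟩⟩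
  rintro ⟨i', j'⟩ hb ⟨hi, hj⟩
  simp only at hi hj
  refine ⟨?_, ?_⟩
  · by_contra! hlt
    exact hdown (ν.up_left_mem hlt hj hb)
  · by_contra! hlt
    exact hright (ν.up_left_mem hi hlt hb)

theorem maximal_mem_iff_rowLen :
    Maximal (· ∈ ν) c ↔ c.2 + 1 = ν.rowLen c.1 ∧ ν.rowLen (c.1 + 1) ≤ c.2 := by
  obtain ⟨i, j⟩ := c
  simp only [maximal_mem_iff, mem_iff_lt_rowLen]
  omega

theorem minimal_notMem_iff_rowLen :
    Minimal (· ∉ ν) c ↔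
      c.2 = ν.rowLen c.1 ∧ (c.1 = 0 ∨ ν.rowLen c.1 < ν.rowLen (c.1 - 1)) := by
  obtain ⟨i, j⟩ := c
  constructor
  · intro h
    have hlt : ∀ b < (i, j), b ∈ ν := fun b hb => by_contra fun h' => h.not_lt h' hb
    have hij : ν.rowLen i ≤ j := not_lt.1 (mt mem_iff_lt_rowLen.2 h.prop)
    refine ⟨?_, ?_⟩
    · rcases Nat.eq_zero_or_pos j with rfl | hj
      · simp only; omega
      · have := mem_iff_lt_rowLen.1 (hlt (i, j - 1) (by simp [Prod.lt_iff]; omega))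
        simp only; omega
    · rcases Nat.eq_zero_or_pos i with rfl | hi
      · exact Or.inl rfl
      · have := mem_iff_lt_rowLen.1 (hlt (i - 1, j) (by simp [Prod.lt_iff]; omega))
        simp only; omega
  · rintro ⟨hj, hi⟩
    simp only at hj hi
    refine ⟨fun h => by rw [mem_iff_lt_rowLen] at h; omega, ?_⟩
    rintro ⟨i', j'⟩ hb ⟨hi', hj'⟩
    simp only [mem_iff_lt_rowLen, not_lt, Prod.mk_le_mk] at hb hi' hj' ⊢
    rcases eq_or_lt_of_le hi' with rfl | hlt
    · omega
    · have := ν.rowLen_anti i' (i - 1) (by omega)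
      omega

def innerCorners (ν : YoungDiagram) : Finset (ℕ × ℕ) :=
  {c ∈ ν.cells | Maximal (· ∈ ν) c}

/-- Every outer corner has the form `(i, ν.rowLen i)` with `i ≤ ν.colLen 0`. -/
def outerCorners (ν : YoungDiagram) : Finset (ℕ × ℕ) :=
  {c ∈ (range (ν.colLen 0 + 1)).image fun i => (i, ν.rowLen i) | Minimal (· ∉ ν) c}

theorem mem_innerCorners : c ∈ ν.innerCorners ↔ Maximal (· ∈ ν) c := by
  rw [innerCorners, mem_filter, mem_cells, and_iff_right_of_imp Maximal.prop]

theorem mem_outerCorners : c ∈ ν.outerCorners ↔ Minimal (· ∉ ν) c := by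
  rw [outerCorners, mem_filter, and_iff_right_iff_imp]
  intro hc
  obtain ⟨hj, hi⟩ := minimal_notMem_iff_rowLen.1 hc
  refine mem_image.2 ⟨c.1, mem_range.2 ?_, Prod.ext rfl hj.symm⟩
  rcases hi with hi | hi
  · omega
  · have := mem_iff_lt_colLen.1 (mem_iff_lt_rowLen.2 (by omega : 0 < ν.rowLen (c.1 - 1)))
    omega

theorem outerCorners_eq (ν : YoungDiagram) : ν.outerCorners =
    insert (0, ν.rowLen 0) (ν.innerCorners.image fun c => (c.1 + 1, ν.rowLen (c.1 + 1))) := by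
  ext ⟨i, j⟩
  simp only [mem_outerCorners, minimal_notMem_iff_rowLen, mem_insert, mem_image,
    mem_innerCorners, maximal_mem_iff_rowLen, Prod.mk.injEq, Prod.exists]
  constructor
  · rintro ⟨rfl, hi | hi⟩
    · exact Or.inl ⟨hi, by rw [hi]⟩
    · have hi0 : i ≠ 0 := by rintro rfl; exact lt_irrefl _ hi
      have hi1 : i - 1 + 1 = i := by omega
      exact Or.inr ⟨i - 1, ν.rowLen (i - 1) - 1, ⟨by omega, by rw [hi1]; omega⟩, hi1,
        by rw [hi1]⟩
  · rintro (⟨rfl, rfl⟩ | ⟨i', j', ⟨h₁, h₂⟩, rfl, rfl⟩)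
    · exact ⟨rfl, Or.inl rfl⟩
    · exact ⟨rfl, Or.inr (by simp only [Nat.add_sub_cancel]; omega)⟩

theorem card_outerCorners (ν : YoungDiagram) : #ν.outerCorners = #ν.innerCorners + 1 := by
  rw [outerCorners_eq, card_insert_of_notMem (by simp), card_image_of_injOn, add_comm]
  intro c hc d hd h
  have hc := maximal_mem_iff_rowLen.1 (mem_innerCorners.1 hc)
  have hd := maximal_mem_iff_rowLen.1 (mem_innerCorners.1 hd)
  have h1 : c.1 = d.1 := by simpa using congrArg Prod.fst h
  exact Prod.ext h1 (by rw [h1] at hc; omega)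

def lowerCovers (ν : YoungDiagram) : Finset YoungDiagram := ν.innerCorners.image ν.eraseCell

def upperCovers (ν : YoungDiagram) : Finset YoungDiagram := ν.outerCorners.image ν.insertCell

theorem mem_lowerCovers : κ ∈ ν.lowerCovers ↔ κ ⋖ ν := by
  simp [lowerCovers, mem_innerCorners, covBy_iff_exists_eraseCell]

theorem mem_upperCovers : κ ∈ ν.upperCovers ↔ ν ⋖ κ := by
  simp [upperCovers, mem_outerCorners, covBy_iff_exists_insertCell]

theorem eraseCell_injOn (ν : YoungDiagram) : Set.InjOn ν.eraseCell ν.innerCorners := by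
  refine fun c hc d hd h => by_contra fun hne => ?_
  rw [mem_coe, mem_innerCorners] at hc hd
  have h' := congrArg YoungDiagram.cells h
  rw [cells_eraseCell hc, cells_eraseCell hd] at h'
  have : c ∈ ν.cells.erase d := mem_erase.2 ⟨hne, (mem_cells _).2 hc.prop⟩
  rw [← h'] at this
  exact (notMem_erase c _) this

theorem insertCell_injOn (ν : YoungDiagram) : Set.InjOn ν.insertCell ν.outerCorners := by
  refine fun c hc d hd h => by_contra fun hne => ?_
  rw [mem_coe, mem_outerCorners] at hc hd
  have h' := congrArg YoungDiagram.cells h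
  rw [cells_insertCell hc, cells_insertCell hd] at h'
  have : c ∈ insert d ν.cells := h' ▸ mem_insert_self c _
  exact (mem_insert.1 this).elim hne fun h => hc.prop ((mem_cells _).1 h)

theorem isDifferential : IsDifferential 1 lowerCovers upperCovers :=
  .of_isModularLattice mem_lowerCovers mem_upperCovers fun ν => by
    rw [upperCovers, lowerCovers, card_image_of_injOn ν.insertCell_injOn,
      card_image_of_injOn ν.eraseCell_injOn, card_outerCorners]

theorem fst_lt_card_of_mem (h : c ∈ ν) : c.1 < ν.card :=
  (mem_iff_lt_colLen.1 h).trans_le <| ν.colLen_eq_card ▸ card_le_card (filter_subset _ _)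

theorem snd_lt_card_of_mem (h : c ∈ ν) : c.2 < ν.card :=
  (mem_iff_lt_rowLen.1 h).trans_le <| ν.rowLen_eq_card ▸ card_le_card (filter_subset _ _)

theorem finite_setOf_card_le (n : ℕ) : {ν : YoungDiagram | ν.card ≤ n}.Finite := by
  refine ((range n ×ˢ range n).powerset.finite_toSet.preimage
    (fun ν _ κ _ h => YoungDiagram.ext h)).subset fun ν hν => ?_
  simp only [Set.mem_preimage, mem_coe, mem_powerset]
  intro c hc
  rw [mem_cells] at hc
  simp only [mem_product, mem_range]
  exact ⟨(fst_lt_card_of_mem hc).trans_le hν, (snd_lt_card_of_mem hc).trans_le hν⟩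

end YoungDiagram

theorem Nat.card_eq_sum_card_fiber {β γ : Type*} [Finite β] (f : β → γ) {t : Finset γ}
    (h : ∀ x, f x ∈ t) : Nat.card β = ∑ c ∈ t, Nat.card {x // f x = c} := by
  have := Fintype.ofFinite β
  simp only [Nat.card_eq_fintype_card, Fintype.card_subtype]
  exact card_eq_sum_card_fiberwise fun x _ => h x

namespace CHA

variable {m n : ℕ} {μ : Fin m → YoungDiagram}

def lowerCovers (μ : Fin m → YoungDiagram) : Finset (Fin m → YoungDiagram) :=
  updates μ fun k => (μ k).lowerCovers

def upperCovers (μ : Fin m → YoungDiagram) : Finset (Fin m → YoungDiagram) :=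
  updates μ fun k => (μ k).upperCovers

theorem isDifferential : IsDifferential m (lowerCovers (m := m)) upperCovers := by
  have := IsDifferential.pi fun _ : Fin m => YoungDiagram.isDifferential
  rw [sum_const, card_univ, Fintype.card_fin, smul_eq_mul, mul_one] at this
  exact this

theorem grade_eq_zero_iff : grade ℕ μ = 0 ↔ μ = ⊥ := by
  simp [Pi.grade_apply, YoungDiagram.grade_eq_card, sum_eq_zero_iff, funext_iff,
    YoungDiagram.ext_iff]

theorem finite_setOf_grade_eq (m n : ℕ) :
    {μ : Fin m → YoungDiagram | grade ℕ μ = n}.Finite :=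
  (Set.Finite.pi fun _ => YoungDiagram.finite_setOf_card_le n).subset fun μ hμ k _ =>
    (single_le_sum (f := fun k => (μ k).card) (fun _ _ => Nat.zero_le _) (mem_univ k)).trans_eq hμ

def nodesOf (s : Fin m → Finset (ℕ × ℕ)) : Finset (MNode m) :=
  (univ.sigma s).map (Equiv.sigmaEquivProd (Fin m) (ℕ × ℕ)).toEmbedding

theorem mem_nodesOf {s : Fin m → Finset (ℕ × ℕ)} {a : MNode m} :
    a ∈ nodesOf s ↔ a.2 ∈ s a.1 := by
  simp [nodesOf]

theorem sum_nodesOf {M : Type*} [AddCommMonoid M] (s : Fin m → Finset (ℕ × ℕ))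
    (g : MNode m → M) :
    ∑ a ∈ nodesOf s, g a = ∑ k, ∑ c ∈ s k, g (k, c) := by
  rw [nodesOf, sum_map, sum_sigma]
  rfl

theorem card_nodesOf_cells (μ : Fin m → YoungDiagram) :
    #(nodesOf fun k => (μ k).cells) = grade ℕ μ := by
  rw [nodesOf, card_map, card_sigma]
  rfl

instance (μ : Fin m → YoungDiagram) : Finite (StdTab m n μ) :=
  Finite.of_injective
    (fun X i => (⟨X.val i, mem_nodesOf.2 ((YoungDiagram.mem_cells _).2 (X.2.1 i))⟩ :
      nodesOf fun k => (μ k).cells))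
    fun _ _ h => Subtype.ext (funext fun i => congrArg Subtype.val (congrFun h i))

theorem card_stdTab_zero (μ : Fin m → YoungDiagram) : Nat.card (StdTab m 0 μ) = 1 :=
  Nat.card_eq_one_iff_unique.2 ⟨⟨fun _ _ => Subtype.ext (funext finZeroElim)⟩,
    ⟨⟨finZeroElim, fun i => i.elim0, fun i => i.elim0, fun i => i.elim0,
      fun i => i.elim0⟩⟩⟩

def Precedes (a b : MNode m) : Prop :=
  a.1 = b.1 ∧ (a.2.1 = b.2.1 ∧ a.2.2 < b.2.2 ∨ a.2.2 = b.2.2 ∧ a.2.1 < b.2.1)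

theorem Precedes.lt {a b : MNode m} (h : Precedes a b) : a.2 < b.2 := by
  rcases h with ⟨-, ⟨h₁, h₂⟩ | ⟨h₁, h₂⟩⟩
  · exact Prod.lt_iff.2 (Or.inr ⟨h₁.le, h₂⟩)
  · exact Prod.lt_iff.2 (Or.inl ⟨h₂, h₁.le⟩)

theorem isStdTabFun_iff {pos : Fin n → MNode m} :
    IsStdTabFun m n μ pos ↔ (∀ i, (pos i).2 ∈ μ (pos i).1) ∧ Injective pos ∧
      ∀ i j, Precedes (pos i) (pos j) → i < j := by
  refine and_congr Iff.rfl (and_congr Iff.rfl ⟨?_, fun h =>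
    ⟨fun i j hk hr hc => h i j ⟨hk, Or.inl ⟨hr, hc⟩⟩,
      fun i j hk hc hr => h i j ⟨hk, Or.inr ⟨hc, hr⟩⟩⟩⟩)
  rintro ⟨hrow, hcol⟩ i j ⟨hk, ⟨hr, hc⟩ | ⟨hc, hr⟩⟩
  exacts [hrow i j hk hr hc, hcol i j hk hc hr]

theorem StdTab.exists_eq (h : grade ℕ μ = n) (X : StdTab m n μ) {a : MNode m}
    (ha : a.2 ∈ μ a.1) : ∃ i, X.val i = a := by
  have himage : univ.image X.val = nodesOf fun k => (μ k).cells := by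
    refine eq_of_subset_of_card_le (fun b hb => ?_) ?_
    · obtain ⟨i, -, rfl⟩ := mem_image.1 hb
      exact mem_nodesOf.2 ((YoungDiagram.mem_cells _).2 (X.2.1 i))
    · rw [card_image_of_injective _ X.2.2.1, card_univ, Fintype.card_fin, card_nodesOf_cells, h]
  have : a ∈ univ.image X.val := himage ▸ mem_nodesOf.2 ((YoungDiagram.mem_cells _).2 ha)
  obtain ⟨i, -, hi⟩ := mem_image.1 this
  exact ⟨i, hi⟩

theorem StdTab.maximal_last (h : grade ℕ μ = n + 1) (X : StdTab m (n + 1) μ) :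
    Maximal (· ∈ μ (X.val (Fin.last n)).1) (X.val (Fin.last n)).2 := by
  obtain ⟨hmem, -, hlt⟩ := isStdTabFun_iff.1 X.2
  have key : ∀ b : MNode m, b.2 ∈ μ b.1 → ¬ Precedes (X.val (Fin.last n)) b := by
    intro b hb hab
    obtain ⟨j, rfl⟩ := X.exists_eq h hb
    exact (hlt _ _ hab).not_ge (Fin.le_last j)
  rw [YoungDiagram.maximal_mem_iff]
  exact ⟨hmem _, fun hb => key (_, _, _) hb ⟨rfl, Or.inr ⟨rfl, lt_add_one _⟩⟩,
    fun hb => key (_, _, _) hb ⟨rfl, Or.inl ⟨rfl, lt_add_one _⟩⟩⟩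

def eraseNode (μ : Fin m → YoungDiagram) (a : MNode m) : Fin m → YoungDiagram :=
  update μ a.1 ((μ a.1).eraseCell a.2)

theorem mem_eraseNode {a b : MNode m} (ha : Maximal (· ∈ μ a.1) a.2) :
    b.2 ∈ eraseNode μ a b.1 ↔ b ≠ a ∧ b.2 ∈ μ b.1 := by
  rcases eq_or_ne b.1 a.1 with hba | hba
  · have hb : b = a ↔ b.2 = a.2 := ⟨congrArg Prod.snd, Prod.ext hba⟩
    simp only [eraseNode, hba, update_self, YoungDiagram.mem_eraseCell ha, ne_eq, hb]
  · rw [eraseNode, update_of_ne hba]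
    exact ⟨fun h => ⟨fun h' => hba (h' ▸ rfl), h⟩, And.right⟩

theorem IsStdTabFun.comp_castSucc {pos : Fin (n + 1) → MNode m}
    (hpos : IsStdTabFun m (n + 1) μ pos)
    (ha : Maximal (· ∈ μ (pos (Fin.last n)).1) (pos (Fin.last n)).2) :
    IsStdTabFun m n (eraseNode μ (pos (Fin.last n))) (pos ∘ Fin.castSucc) := by
  obtain ⟨hmem, hinj, hlt⟩ := isStdTabFun_iff.1 hpos
  exact isStdTabFun_iff.2
    ⟨fun i => (mem_eraseNode ha).2 ⟨hinj.ne (Fin.castSucc_lt_last i).ne, hmem _⟩,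
    hinj.comp (Fin.castSucc_injective n), fun i j h => Fin.castSucc_lt_castSucc_iff.1 (hlt _ _ h)⟩

theorem IsStdTabFun.snoc {Y : Fin n → MNode m} {a : MNode m} (ha : Maximal (· ∈ μ a.1) a.2)
    (hY : IsStdTabFun m n (eraseNode μ a) Y) : IsStdTabFun m (n + 1) μ (Fin.snoc Y a) := by
  obtain ⟨hmem, hinj, hlt⟩ := isStdTabFun_iff.1 hY
  simp only [mem_eraseNode ha] at hmem
  have hlast : ∀ b : MNode m, b.2 ∈ μ b.1 → ¬ Precedes a b := fun b hb hab =>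
    ha.not_gt (by rw [hab.1]; exact hb) hab.lt
  refine isStdTabFun_iff.2
    ⟨fun i => ?_, Fin.snoc_injective_of_injective hinj ?_, fun i j h => ?_⟩
  · induction i using Fin.lastCases with
    | last => simpa using ha.prop
    | cast i => simpa using (hmem i).2
  · rintro ⟨i, hi⟩
    exact (hmem i).1 hi
  · induction j using Fin.lastCases with
    | last =>
      induction i using Fin.lastCases with
      | last => exact absurd h.lt (lt_irrefl _)
      | cast i => exact Fin.castSucc_lt_last i
    | cast j =>
      induction i using Fin.lastCases with
      | last =>
        simp only [Fin.snoc_last, Fin.snoc_castSucc] at h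
        exact absurd h (hlast _ (hmem j).2)
      | cast i =>
        simp only [Fin.snoc_castSucc] at h
        exact Fin.castSucc_lt_castSucc_iff.2 (hlt i j h)

def StdTab.eraseLastEquiv {a : MNode m} (ha : Maximal (· ∈ μ a.1) a.2) :
    {X : StdTab m (n + 1) μ // X.val (Fin.last n) = a} ≃ StdTab m n (eraseNode μ a) where
  toFun X := ⟨X.1.val ∘ Fin.castSucc, by
    obtain ⟨X, rfl⟩ := X
    exact X.2.comp_castSucc ha⟩
  invFun Y := ⟨⟨Fin.snoc Y.val a, Y.2.snoc ha⟩, Fin.snoc_last (α := fun _ => MNode m) _ _⟩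
  left_inv X := by
    refine Subtype.ext (Subtype.ext (funext fun i => ?_))
    induction i using Fin.lastCases with
    | last => exact (Fin.snoc_last (α := fun _ => MNode m) _ _).trans X.2.symm
    | cast i => exact Fin.snoc_castSucc (α := fun _ => MNode m) _ _ _
  right_inv Y := Subtype.ext (funext fun i => Fin.snoc_castSucc (α := fun _ => MNode m) _ _ _)

theorem card_stdTab_succ (h : grade ℕ μ = n + 1) :
    Nat.card (StdTab m (n + 1) μ) = ∑ κ ∈ lowerCovers μ, Nat.card (StdTab m n κ) := by
  rw [lowerCovers, sum_updates fun k h => (YoungDiagram.mem_lowerCovers.1 h).lt.false,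
    Nat.card_eq_sum_card_fiber (fun X : StdTab m (n + 1) μ => X.val (Fin.last n))
      (t := nodesOf fun k => (μ k).innerCorners)
      fun X => mem_nodesOf.2 (YoungDiagram.mem_innerCorners.2 (X.maximal_last h)), sum_nodesOf]
  refine sum_congr rfl fun k _ => ?_
  rw [YoungDiagram.lowerCovers, sum_image (μ k).eraseCell_injOn]
  exact sum_congr rfl fun c hc =>
    Nat.card_congr (StdTab.eraseLastEquiv (YoungDiagram.mem_innerCorners.1 hc))

theorem card_stdTab_grade (h : grade ℕ μ ≠ 0) :
    Nat.card (StdTab m (grade ℕ μ) μ) =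
      ∑ κ ∈ lowerCovers μ, Nat.card (StdTab m (grade ℕ κ) κ) := by
  obtain ⟨n, hn⟩ := Nat.exists_eq_succ_of_ne_zero h
  rw [hn, card_stdTab_succ hn]
  refine sum_congr rfl fun κ hκ => ?_
  rw [(isDifferential.mem_down.1 hκ).grade_eq_add_one] at hn
  rw [Nat.succ_injective hn]

theorem sum_squares_standard_m_tableaux_general
    (m : ℕ) (n : ℕ) :
    (∑ᶠ μ : { μ : Fin m → YoungDiagram // ∑ k, (μ k).card = n },
        (Nat.card (StdTab m n μ.val)) ^ 2) = n.factorial * m ^ n := by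
  set S : ℕ → Finset (Fin m → YoungDiagram) := fun n => (finite_setOf_grade_eq m n).toFinset
  have hS : ∀ {n μ}, μ ∈ S n ↔ grade ℕ μ = n := Set.Finite.mem_toFinset _
  have hS₀ : S 0 = {⊥} := by
    ext μ
    rw [hS, mem_singleton, grade_eq_zero_iff]
  calc (∑ᶠ μ : { μ : Fin m → YoungDiagram // ∑ k, (μ k).card = n },
        (Nat.card (StdTab m n μ.val)) ^ 2)
      = ∑ μ ∈ S n, Nat.card (StdTab m (grade ℕ μ) μ) ^ 2 := by
        refine (finsum_subtype_eq_finsum_cond (f := fun μ => Nat.card (StdTab m n μ) ^ 2) _).trans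
          ((finsum_mem_eq_finite_toFinset_sum _ (finite_setOf_grade_eq m n)).trans ?_)
        exact sum_congr rfl fun μ hμ => by rw [hS.1 hμ]
    _ = n.factorial * m ^ n := by
        rw [isDifferential.sum_sq_grade_eq (fun μ => card_stdTab_grade) hS, hS₀, sum_singleton,
          grade_eq_zero_iff.2 rfl, card_stdTab_zero, one_pow, mul_one]

/-- Lemma B.1.  For all `m ≥ 1` and `n ≥ 0`, the sum over all
`m`-partitions `μ` of `n` of the square of the number of standard `m`-tableaux of
shape `μ` equals `n!·mⁿ`.  (The index type — the `m`-partitions of `n` — is finite,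
so the finite sum `∑ᶠ` is the ordinary sum.) -/
theorem sum_squares_standard_m_tableaux
    (m : ℕ) (hm : 1 ≤ m) (n : ℕ) :
    (∑ᶠ μ : { μ : Fin m → YoungDiagram // ∑ k, (μ k).card = n },
        (Nat.card (StdTab m n μ.val)) ^ 2) = n.factorial * m ^ n :=
  sum_squares_standard_m_tableaux_general m n

end CHA
end
end
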